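/- arXiv:math/0603468 — 8 statements merged into one kernel-verified Lean document; each statement's English description precedes it below -/
import Mathlib

section
/- An infinite group that is not cyclic cannot be written as the union of finitely many of its cyclic subgroups. -/
/-!
By B. H. Neumann's lemma the cyclic subgroups of finite index already cover `G`. These are
infinite, so `G` is torsion-free, and their intersection `K` is a central subgroup of finite
index. For central `K` the transfer `G → K` is `g ↦ g ^ [G : K]`, which is injective by
torsion-freeness, so `G` embeds into `K`, a subgroup of a cyclic group.
-/

open Subgroup Pointwise

namespace Subgroup

variable {G : Type*} [Group G]

theorem exists_finiteIndex_mem_of_forall_exists_mem {ι : Type*} [Finite ι] (H : ι → Subgroup G)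
    (hcover : ∀ x, ∃ i, x ∈ H i) : ∀ x, ∃ i, (H i).FiniteIndex ∧ x ∈ H i := by
  classical
  have := Fintype.ofFinite ι
  have hcovers : ⋃ i ∈ Finset.univ, (1 : G) • (H i : Set G) = Set.univ := by
    simpa [Set.eq_univ_iff_forall] using hcover
  intro x
  simpa using Set.eq_univ_iff_forall.mp (leftCoset_cover_filter_FiniteIndex hcovers) x

theorem infinite_of_finiteIndex [Infinite G] (H : Subgroup G) [H.FiniteIndex] : Infinite H := by
  by_contra hfin
  have : Finite H := not_infinite_iff_finite.mp hfin
  have := Finite.of_subgroup_quotient H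
  exact not_finite G

theorem not_isOfFinOrder_of_finiteIndex_zpowers [Infinite G] {g : G}
    [(zpowers g).FiniteIndex] : ¬IsOfFinOrder g :=
  infinite_zpowers.mp (Set.infinite_coe_iff.mp (infinite_of_finiteIndex _))

theorem le_center_of_forall_exists_zpowers {K : Subgroup G}
    (h : ∀ x : G, ∃ g, x ∈ zpowers g ∧ K ≤ zpowers g) : K ≤ center G := by
  intro k hk
  refine mem_center_iff.mpr fun x => ?_
  obtain ⟨g, hx, hKg⟩ := h x
  exact congrArg Subtype.val (mul_comm' (⟨x, hx⟩ : zpowers g) ⟨k, hKg hk⟩)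

open scoped IsMulCommutative in
theorem exists_monoidHom_eq_pow_index_of_le_center (K : Subgroup G) [K.FiniteIndex]
    (hK : K ≤ center G) : ∃ f : G →* K, ∀ g, (f g : G) = g ^ K.index := by
  have : IsMulCommutative K :=
    ⟨⟨fun a b => Subtype.ext (mem_center_iff.mp (hK b.2) a)⟩⟩
  refine ⟨MonoidHom.transfer (MonoidHom.id K), fun g => ?_⟩
  rw [MonoidHom.transfer_eq_pow _ g fun k g₀ hk => ?_]
  · rfl
  · exact mul_right_cancel ((mem_center_iff.mp (hK hk) g₀).symm.trans (by group))

end Subgroup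

theorem IsOfFinOrder.eq_one_of_mem_zpowers {G : Type*} [Group G] {g x : G}
    (hx : IsOfFinOrder x) (hxg : x ∈ zpowers g) (hg : ¬IsOfFinOrder g) : x = 1 := by
  obtain ⟨k, rfl⟩ := mem_zpowers_iff.mp hxg
  obtain ⟨m, rfl | rfl⟩ := Int.eq_nat_or_neg k <;>
    simp_all [zpow_neg, isOfFinOrder_pow]

/-- An infinite group that is not cyclic cannot be written as the union of
finitely many of its cyclic subgroups: if an infinite group is covered by
finitely many cyclic subgroups, then it is cyclic. -/
theorem infinite_union_fin_cyclic_subgroups_isCyclic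
    {G : Type*} [Group G] [Infinite G] (n : ℕ) (C : Fin n → Subgroup G)
    (hcyc : ∀ i, ∃ g : G, C i = Subgroup.zpowers g)
    (hcover : ∀ x : G, ∃ i, x ∈ C i) :
    IsCyclic G := by
  classical
  choose g hg using hcyc
  obtain rfl : C = fun i => zpowers (g i) := funext hg
  have hcover' := exists_finiteIndex_mem_of_forall_exists_mem _ hcover
  set S := Finset.univ.filter fun i => (zpowers (g i)).FiniteIndex
  set K := ⨅ i ∈ S, zpowers (g i)
  have : K.FiniteIndex := finiteIndex_iInf' _ (by simp [S])
  have hKle : ∀ i, (zpowers (g i)).FiniteIndex → K ≤ zpowers (g i) := fun i hi =>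
    iInf₂_le i (by simpa [S] using hi)
  have hKcenter : K ≤ center G := le_center_of_forall_exists_zpowers fun x =>
    let ⟨i, hi, hx⟩ := hcover' x; ⟨g i, hx, hKle i hi⟩
  obtain ⟨f, hf⟩ := exists_monoidHom_eq_pow_index_of_le_center K hKcenter
  have hf_inj : Function.Injective f := by
    refine (injective_iff_map_eq_one f).mpr fun x hx => ?_
    obtain ⟨i, hi, hxi⟩ := hcover' x
    refine IsOfFinOrder.eq_one_of_mem_zpowers ?_ hxi not_isOfFinOrder_of_finiteIndex_zpowers
    refine isOfFinOrder_iff_pow_eq_one.mpr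
      ⟨K.index, Nat.pos_of_ne_zero FiniteIndex.index_ne_zero, ?_⟩
    rw [← hf, hx, OneMemClass.coe_one]
  obtain ⟨i₀, hi₀, -⟩ := hcover' 1
  have : IsCyclic K := isCyclic_of_le (hKle i₀ hi₀)
  exact isCyclic_of_injective f hf_inj
end

section
/- The group ℤ ⊕ ℤ/pℤ (for p a prime) is not a union of finitely many cyclic subgroups. -/
/-- The group `ℤ ⊕ ℤ/pℤ` (for `p` prime) is not a union of finitely many
cyclic subgroups. -/
theorem int_prod_zmod_not_union_fin_cyclic (p : ℕ) (hp : p.Prime) :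
    ¬ ∃ (n : ℕ) (C : Fin n → Subgroup (Multiplicative (ℤ × ZMod p))),
      (∀ i, ∃ g, C i = Subgroup.zpowers g) ∧
      (∀ x : Multiplicative (ℤ × ZMod p), ∃ i, x ∈ C i) := by
  haveI := Fact.mk hp
  rintro ⟨n, C, hcyc, hcov⟩
  choose f hf using fun k : ℕ =>
    hcov (Multiplicative.ofAdd (((p : ℤ) ^ k, (1 : ZMod p))))
  obtain ⟨j, k, hne, hfe⟩ := Finite.exists_ne_map_eq_of_infinite f
  -- wlog j < k
  wlog hjk : j < k generalizing j k
  · exact this k j hne.symm hfe.symm (by omega)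
  obtain ⟨g, hg⟩ := hcyc (f j)
  have hj := hf j
  have hk := hf k
  rw [hg] at hj
  rw [← hfe, hg] at hk
  obtain ⟨a, ha⟩ := hj
  obtain ⟨b, hb⟩ := hk
  -- pass to additive components
  have ha' : a • g.toAdd = ((p : ℤ) ^ j, (1 : ZMod p)) := by
    have := congrArg Multiplicative.toAdd ha
    simpa using this
  have hb' : b • g.toAdd = ((p : ℤ) ^ k, (1 : ZMod p)) := by
    have := congrArg Multiplicative.toAdd hb
    simpa using this
  set m := g.toAdd.1 with hm_def
  set z := g.toAdd.2 with hz_def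
  have ha1 : a * m = (p : ℤ) ^ j := by
    have := congrArg Prod.fst ha'
    simpa [zsmul_eq_mul] using this
  have ha2 : (a : ZMod p) * z = 1 := by
    have := congrArg Prod.snd ha'
    simpa [zsmul_eq_mul] using this
  have hb1 : b * m = (p : ℤ) ^ k := by
    have := congrArg Prod.fst hb'
    simpa [zsmul_eq_mul] using this
  have hb2 : (b : ZMod p) * z = 1 := by
    have := congrArg Prod.snd hb'
    simpa [zsmul_eq_mul] using this
  have hm : m ≠ 0 := by
    intro h
    rw [h, mul_zero] at ha1
    exact (pow_ne_zero j (by exact_mod_cast hp.ne_zero)) ha1.symm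
  have hbval : b = (p : ℤ) ^ (k - j) * a := by
    have hkey : b * m = ((p : ℤ) ^ (k - j) * a) * m := by
      rw [hb1, mul_assoc, ha1, ← pow_add]
      congr 1
      omega
    exact mul_right_cancel₀ hm hkey
  have hbz : (b : ZMod p) = 0 := by
    rw [hbval]
    push_cast
    have : ((p : ZMod p)) = 0 := by exact_mod_cast ZMod.natCast_self p
    rw [this]
    rw [zero_pow (by omega)]
    ring
  rw [hbz, zero_mul] at hb2
  exact zero_ne_one hb2
end

section
/- A torsion-free group containing a cyclic subgroup of finite index is itself cyclic. -/
/-!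
Let `N` be the normal core of the cyclic subgroup; it is cyclic, normal and of finite index `k`.
For `g : G`, the power `g ^ k` lies in `N = ⟨n⟩`, say `g ^ k = n ^ j`, and `g n g⁻¹ = n ^ m`.
Conjugating `n ^ j` by `g` gives `n ^ (m j) = n ^ j`, so `m = 1` unless `j = 0`, in which case
`g = 1`. Hence `N` is central, the centre has finite index, and the transfer `g ↦ g ^ [G : Z(G)]`
into the centre is injective, so `G` is abelian. Then `g ↦ g ^ k` embeds `G` into the cyclic
group `N`.
-/

open Subgroup

section TorsionFree

variable {G : Type*} [Group G]

theorem eq_one_of_pow_eq_one_of_torsionFree (htf : ∀ g : G, g ≠ 1 → ¬IsOfFinOrder g)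
    {g : G} {k : ℕ} (hk : k ≠ 0) (h : g ^ k = 1) : g = 1 := by
  by_contra hg
  exact htf g hg (isOfFinOrder_iff_pow_eq_one.mpr ⟨k, Nat.pos_of_ne_zero hk, h⟩)

theorem commute_of_conj_mem_zpowers {g n : G} (hn : ¬IsOfFinOrder n)
    (hconj : g * n * g⁻¹ ∈ zpowers n) {j : ℤ} (hj : j ≠ 0) (hgj : Commute g (n ^ j)) :
    Commute g n := by
  obtain ⟨m, hm⟩ := mem_zpowers_iff.mp hconj
  have hmj : n ^ (m * j) = n ^ j := by
    rw [zpow_mul, hm, conj_zpow, hgj.eq, mul_inv_cancel_right]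
  have hm1 : m = 1 := (mul_eq_right₀ hj).mp (injective_zpow_iff_not_isOfFinOrder.mpr hn hmj)
  rw [hm1, zpow_one] at hm
  exact mul_inv_eq_iff_eq_mul.mp hm.symm

theorem le_center_of_isCyclic_of_torsionFree (htf : ∀ g : G, g ≠ 1 → ¬IsOfFinOrder g)
    (N : Subgroup G) [N.Normal] [N.FiniteIndex] [IsCyclic N] : N ≤ center G := by
  obtain ⟨n, rfl⟩ := N.isCyclic_iff_exists_zpowers_eq_top.mp ‹_›
  rw [zpowers_le, mem_center_iff]
  intro g
  by_cases hn : n = 1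
  · simp [hn]
  obtain ⟨j, hj⟩ := mem_zpowers_iff.mp (pow_index_mem (zpowers n) g)
  by_cases hj0 : j = 0
  · have hg : g = 1 := eq_one_of_pow_eq_one_of_torsionFree htf FiniteIndex.index_ne_zero
      (by rw [← hj, hj0, zpow_zero])
    simp [hg]
  · refine commute_of_conj_mem_zpowers (htf n hn) (Normal.conj_mem ‹_› n (mem_zpowers n) g)
      hj0 ?_
    rw [hj]
    exact (Commute.refl g).pow_right _

theorem commute_of_torsionFree_of_center_finiteIndex (htf : ∀ g : G, g ≠ 1 → ¬IsOfFinOrder g)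
    [(center G).FiniteIndex] (a b : G) : Commute a b := by
  have hinj : Function.Injective (MonoidHom.transferCenterPow G) := by
    refine (injective_iff_map_eq_one _).mpr fun g hg => ?_
    exact eq_one_of_pow_eq_one_of_torsionFree htf FiniteIndex.index_ne_zero
      (by simpa using congrArg Subtype.val hg)
  apply hinj
  rw [map_mul, map_mul]
  exact Subtype.ext (mem_center_iff.mp (MonoidHom.transferCenterPow G b).2 _)

theorem isCyclic_of_torsionFree_of_commute (htf : ∀ g : G, g ≠ 1 → ¬IsOfFinOrder g)
    (hcomm : ∀ a b : G, Commute a b) (H : Subgroup G) [IsCyclic H] [H.FiniteIndex] :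
    IsCyclic G := by
  have : H.Normal := ⟨fun n hn g => by rwa [(hcomm g n).eq, mul_inv_cancel_right]⟩
  let powIndex : G →* H :=
    { toFun g := ⟨g ^ H.index, H.pow_index_mem g⟩
      map_one' := Subtype.ext (one_pow _)
      map_mul' a b := Subtype.ext ((hcomm a b).mul_pow H.index) }
  refine isCyclic_of_injective powIndex ((injective_iff_map_eq_one _).mpr fun g hg => ?_)
  exact eq_one_of_pow_eq_one_of_torsionFree htf FiniteIndex.index_ne_zero (congrArg Subtype.val hg)

end TorsionFree

/-- A torsion-free group containing a cyclic subgroup of finite index is itself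
cyclic. -/
theorem isCyclic_of_torsionFree_finiteIndex_cyclic
    {G : Type*} [Group G]
    (htf : ∀ g : G, g ≠ 1 → ¬ IsOfFinOrder g)
    (H : Subgroup G) (hH : IsCyclic H) (hfi : H.FiniteIndex) :
    IsCyclic G := by
  have : IsCyclic H.normalCore := isCyclic_of_le H.normalCore_le
  have : (center G).FiniteIndex :=
    finiteIndex_of_le (le_center_of_isCyclic_of_torsionFree htf H.normalCore)
  exact isCyclic_of_torsionFree_of_commute htf (commute_of_torsionFree_of_center_finiteIndex htf)
    H.normalCore
end

section
/- Let A be a nontrivial subgroup of a group B and b ∈ B. If the subgroups b^{-i} A b^i for i ∈ ℤ generate their free product inside B (i.e., the conjugates A^{b^i} are in free position), then b is transcendental over A, meaning the subgroup generated by A and b is isomorphic to the free product A * ⟨b⟩ with ⟨b⟩ infinite cyclic, via the natural map. -/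
/-!
Let `N = ∗ᵢ A` be the free product of copies of `A` indexed by `ℤ`, and let `ℤ` act on `N` by
shifting indices. Sending `aᵢ ↦ b⁻ⁱ a bⁱ` and `t ↦ bᵗ` defines `ψ : N ⋊ ℤ → B`, and the same
recipe inside `A * ℤ` gives a surjection `N ⋊ ℤ → A * ℤ` through which the canonical map
`A * ℤ → B` factors as `ψ`; so it suffices that `ψ` is injective. If `ψ (n, t) = 1`, then the image
of `n` is `b⁻ᵗ`, so by free position `n` conjugates `a₀` to `aₜ`. Projecting `N` onto its `0`-th
factor kills `aₜ` for `t ≠ 0` but not the conjugate of `a₀ ≠ 1`; hence `t = 0`, and then `n = 1`.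
-/

open Monoid

namespace Monoid.CoprodI

theorem eq_of_of_eq_conj_of {ι : Type*} {G : ι → Type*} [∀ i, Group (G i)] {i j : ι}
    {a : G i} {a' : G j} (ha' : a' ≠ 1) {n : CoprodI G} (h : of a = n * of a' * n⁻¹) : i = j := by
  classical
  by_contra hij
  have := congrArg (lift (Pi.mulSingle j (MonoidHom.id (G j)))) h
  simp only [lift_of, Pi.mulSingle_eq_of_ne hij, map_mul, map_inv, Pi.mulSingle_eq_same,
    MonoidHom.one_apply, MonoidHom.id_apply] at this
  exact ha' (conj_eq_one_iff.mp this.symm)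

variable {A : Type*} [Group A]

def shiftHom (m : ℤ) : CoprodI (fun _ : ℤ => A) →* CoprodI (fun _ : ℤ => A) :=
  lift fun i => of (M := fun _ : ℤ => A) (i := i - m)

@[simp] lemma shiftHom_of (m i : ℤ) (a : A) :
    shiftHom m (of (M := fun _ : ℤ => A) (i := i) a) = of (M := fun _ : ℤ => A) (i := i - m) a :=
  lift_of _ _

lemma shiftHom_comp_shiftHom (m k : ℤ) :
    (shiftHom m).comp (shiftHom k) = (shiftHom (m + k) : CoprodI (fun _ : ℤ => A) →* _) := by
  ext i a
  simp [sub_sub, add_comm]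

@[simp] lemma shiftHom_zero : (shiftHom 0 : CoprodI (fun _ : ℤ => A) →* _) = .id _ := by
  ext i a
  simp

def shiftAut : Multiplicative ℤ →* MulAut (CoprodI fun _ : ℤ => A) where
  toFun z := (shiftHom z.toAdd).toMulEquiv (shiftHom (-z.toAdd))
    (by simp [shiftHom_comp_shiftHom]) (by simp [shiftHom_comp_shiftHom])
  map_one' := MulEquiv.ext fun x => by simp
  map_mul' z w := MulEquiv.ext fun x => by simp [← shiftHom_comp_shiftHom]

@[simp] lemma shiftAut_apply (z : Multiplicative ℤ) (x : CoprodI fun _ : ℤ => A) :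
    shiftAut z x = shiftHom z.toAdd x := rfl

end Monoid.CoprodI

open CoprodI

namespace FreePosition

variable {A B C : Type*} [Group A] [Group B] [Group C]

def conjugatesLift (φ : A →* B) (b : B) : CoprodI (fun _ : ℤ => A) →* B :=
  CoprodI.lift fun i => (MulAut.conj (b ^ (-i))).toMonoidHom.comp φ

@[simp] lemma conjugatesLift_of (φ : A →* B) (b : B) (i : ℤ) (a : A) :
    conjugatesLift φ b (of (M := fun _ : ℤ => A) (i := i) a) = b ^ (-i) * φ a * (b ^ (-i))⁻¹ :=
  lift_of _ _

lemma conjugatesLift_comp_shiftAut (φ : A →* B) (b : B) (z : Multiplicative ℤ) :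
    (conjugatesLift φ b).comp (shiftAut z).toMonoidHom =
      (MulAut.conj (zpowersHom B b z)).toMonoidHom.comp (conjugatesLift φ b) := by
  ext i a
  simp only [MonoidHom.comp_apply, MulEquiv.coe_toMonoidHom, shiftAut_apply, shiftHom_of,
    conjugatesLift_of, MulAut.conj_apply, zpowersHom_apply]
  group

def semidirectLift (φ : A →* B) (b : B) :
    CoprodI (fun _ : ℤ => A) ⋊[shiftAut] Multiplicative ℤ →* B :=
  SemidirectProduct.lift (conjugatesLift φ b) (zpowersHom B b) (conjugatesLift_comp_shiftAut φ b)

lemma comp_semidirectLift (f : B →* C) (φ : A →* B) (b : B) :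
    f.comp (semidirectLift φ b) = semidirectLift (f.comp φ) (f b) := by
  refine SemidirectProduct.hom_ext (CoprodI.ext_hom _ _ fun i => ?_) (MonoidHom.ext_mint ?_)
  · ext a
    simp [semidirectLift]
  · simp [semidirectLift]

lemma semidirectLift_inl_inr_surjective :
    Function.Surjective (semidirectLift (Coprod.inl : A →* Coprod A (Multiplicative ℤ))
      (Coprod.inr (Multiplicative.ofAdd 1))) := by
  rw [← MonoidHom.range_eq_top, eq_top_iff, ← Coprod.range_inl_sup_range_inr, sup_le_iff]
  constructor
  · rintro _ ⟨a, rfl⟩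
    exact ⟨SemidirectProduct.inl (of (i := (0 : ℤ)) a), by simp [semidirectLift]⟩
  · rintro _ ⟨z, rfl⟩
    refine ⟨SemidirectProduct.inr z, ?_⟩
    simpa [semidirectLift] using (MonoidHom.apply_mint
      (f := (Coprod.inr : Multiplicative ℤ →* Coprod A (Multiplicative ℤ))) (n := z)).symm

lemma coprodLift_comp_semidirectLift (φ : A →* B) (b : B) :
    (Coprod.lift φ (zpowersHom B b)).comp
      (semidirectLift Coprod.inl (Coprod.inr (Multiplicative.ofAdd 1))) = semidirectLift φ b := by
  simp [comp_semidirectLift]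

lemma semidirectLift_injective [Nontrivial A] {φ : A →* B} {b : B}
    (hfree : Function.Injective (conjugatesLift φ b)) :
    Function.Injective (semidirectLift φ b) := by
  obtain ⟨a, ha⟩ := exists_ne (1 : A)
  rw [injective_iff_map_eq_one]
  rintro ⟨n, z⟩ h
  have hn : conjugatesLift φ b n = b ^ (-z.toAdd) := by
    rw [zpow_neg, ← mul_eq_one_iff_eq_inv]
    exact h
  have hconj : of (i := z.toAdd) a = n * of (i := 0) a * n⁻¹ := hfree (by simp [hn])
  obtain rfl : z = 1 := eq_of_of_eq_conj_of ha hconj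
  obtain rfl : n = 1 := hfree (by simpa using hn)
  rfl

theorem coprodLift_zpowersHom_injective [Nontrivial A] {φ : A →* B} {b : B}
    (hfree : Function.Injective (conjugatesLift φ b)) :
    Function.Injective (Coprod.lift φ (zpowersHom B b)) := by
  refine Function.Injective.of_comp_right ?_ semidirectLift_inl_inr_surjective
  rw [← MonoidHom.coe_comp, coprodLift_comp_semidirectLift]
  exact semidirectLift_injective hfree

end FreePosition

/-- Let `A` be a nontrivial subgroup of a group `B` and `b ∈ B`.  If the
conjugates `A^{bⁱ} = b⁻ⁱ A bⁱ` (`i ∈ ℤ`) are in free position, i.e. the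
canonical map from the free product of copies of `A` indexed by `ℤ` into `B`
is injective, then `b` is transcendental over `A`: the canonical map
`A * ℤ → B` (identical on `A`, the generator of `ℤ` to `b`) is injective. -/
theorem transcendental_of_free_position
    {B : Type*} [Group B] (A : Subgroup B) (hA : A ≠ ⊥) (b : B)
    (hfree : Function.Injective
      (Monoid.CoprodI.lift
        (fun i : ℤ =>
          (MulAut.conj (b ^ (-i))).toMonoidHom.comp A.subtype :
          ∀ i : ℤ, (fun _ : ℤ => A) i →* B))) :
    Function.Injective
      (Monoid.Coprod.lift A.subtype (zpowersHom B b) :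
        Monoid.Coprod A (Multiplicative ℤ) →* B) := by
  have : Nontrivial A := (Subgroup.nontrivial_iff_ne_bot A).mpr hA
  exact FreePosition.coprodLift_zpowersHom_injective hfree
end

section
/- Every right-orderable group has the strong unique product property: for any finite nonempty subsets X, Y with |Y| ≥ 2, the product XY contains at least two uniquely decomposable elements x₁y₁ and x₂y₂ with y₁ ≠ y₂. -/
/-!
Flipping a right-invariant order through inversion, `a ≺ b :↔ a⁻¹ < b⁻¹`, gives a left-invariant
linear order. For a left-invariant order, if `y` is the largest element of `Y` and `x * y` is the
largest of the products `a * y` with `a ∈ X`, then `x * y` is uniquely represented: any other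
`a * b` with `b < y` satisfies `a * b < a * y ≤ x * y`. The same holds for the smallest element of
`Y`, and when `|Y| ≥ 2` the largest and smallest elements of `Y` differ.
-/

section LeftOrdered

variable {G : Type*} [Mul G] [IsRightCancelMul G] [LinearOrder G] [MulLeftStrictMono G]

theorem uniqueMul_of_forall_le {X Y : Finset G} {x y : G} (hy : ∀ b ∈ Y, b ≤ y)
    (hxy : ∀ a ∈ X, a * y ≤ x * y) : UniqueMul X Y x y := by
  intro a b ha hb hab
  rcases (hy b hb).lt_or_eq with hlt | rfl
  · exact absurd hab ((mul_lt_mul_right hlt a).trans_le (hxy a ha)).ne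
  · exact ⟨mul_right_cancel hab, rfl⟩

theorem uniqueMul_of_forall_ge {X Y : Finset G} {x y : G} (hy : ∀ b ∈ Y, y ≤ b)
    (hxy : ∀ a ∈ X, x * y ≤ a * y) : UniqueMul X Y x y :=
  uniqueMul_of_forall_le (G := Gᵒᵈ) hy hxy

theorem exists_uniqueMul_ne_of_two_le_card {X Y : Finset G} (hX : X.Nonempty)
    (hY : 2 ≤ Y.card) :
    ∃ x₁ ∈ X, ∃ y₁ ∈ Y, ∃ x₂ ∈ X, ∃ y₂ ∈ Y,
      y₁ ≠ y₂ ∧ UniqueMul X Y x₁ y₁ ∧ UniqueMul X Y x₂ y₂ := by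
  have hYne : Y.Nonempty := Finset.card_pos.mp (by omega)
  obtain ⟨x₁, hx₁, hx₁max⟩ := X.exists_max_image (· * Y.max' hYne) hX
  obtain ⟨x₂, hx₂, hx₂min⟩ := X.exists_min_image (· * Y.min' hYne) hX
  exact ⟨x₁, hx₁, _, Y.max'_mem hYne, x₂, hx₂, _, Y.min'_mem hYne,
    (Y.min'_lt_max'_of_card hY).ne',
    uniqueMul_of_forall_le (fun b hb => Y.le_max' b hb) hx₁max,
    uniqueMul_of_forall_ge (fun b hb => Y.min'_le b hb) hx₂min⟩

end LeftOrdered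

/-- Every right-orderable group has the strong unique product property: if `G`
admits a strict total order invariant under right multiplication, then for any
finite nonempty subsets `X, Y ⊆ G` with `|Y| ≥ 2` the product `XY` contains two
uniquely decomposable elements `x₁y₁` and `x₂y₂` with `y₁ ≠ y₂`. -/
theorem strong_uniqueProd_of_rightOrderable
    {G : Type*} [Group G] (lt : G → G → Prop)
    (htot : IsStrictTotalOrder G lt)
    (hinv : ∀ a b c : G, lt a b → lt (a * c) (b * c))
    (X Y : Finset G) (hX : X.Nonempty) (hY : 2 ≤ Y.card) :
    ∃ x₁ ∈ X, ∃ y₁ ∈ Y, ∃ x₂ ∈ X, ∃ y₂ ∈ Y,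
      y₁ ≠ y₂ ∧ UniqueMul X Y x₁ y₁ ∧ UniqueMul X Y x₂ y₂ := by
  classical
  let r : G → G → Prop := fun a b => lt a⁻¹ b⁻¹
  have : IsStrictTotalOrder G r :=
    (RelEmbedding.preimage (Equiv.inv G).toEmbedding lt).isStrictTotalOrder
  let : LinearOrder G := linearOrderOfSTO r
  have : MulLeftStrictMono G := ⟨fun c {a b} (h : lt a⁻¹ b⁻¹) =>
    show lt (c * a)⁻¹ (c * b)⁻¹ by simpa only [mul_inv_rev] using hinv _ _ c⁻¹ h⟩
  exact exists_uniqueMul_ne_of_two_le_card hX hY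
end

section
/- If every infinite subset of an infinite group G contains two distinct commuting elements, and moreover any two infinite subsets X, Y of G contain a commuting pair x ∈ X, y ∈ Y, then G is abelian. -/
open Classical in
/-- Infinite Ramsey-type lemma: if every infinite subset contains two distinct
related elements (for a symmetric relation `r`), then every infinite set
contains an infinite pairwise-related subset. -/
lemma exists_infinite_pairwise_rel {α : Type*} (r : α → α → Prop)
    (hsym : ∀ x y, r x y → r y x)
    (h : ∀ X : Set α, X.Infinite → ∃ x ∈ X, ∃ y ∈ X, x ≠ y ∧ r x y)
    {A : Set α} (hA : A.Infinite) :
    ∃ S : Set α, S ⊆ A ∧ S.Infinite ∧ ∀ x ∈ S, ∀ y ∈ S, x ≠ y → r x y := by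
  classical
  -- the type of infinite subsets of `A`
  let T := {S : Set α // S.Infinite ∧ S ⊆ A}
  let a : T → α := fun S => S.2.1.nonempty.some
  have ha : ∀ S : T, a S ∈ S.1 := fun S => S.2.1.nonempty.some_mem
  let good : T → Set α := fun S => {x ∈ S.1 | x ≠ a S ∧ r (a S) x}
  let bad : T → Set α := fun S => {x ∈ S.1 | x ≠ a S ∧ ¬ r (a S) x}
  have hinf : ∀ S : T, ¬ (good S).Infinite → (bad S).Infinite := by
    intro S hg
    by_contra hb
    rw [Set.not_infinite] at hg hb
    have hcover : S.1 ⊆ insert (a S) (good S ∪ bad S) := by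
      intro x hx
      by_cases h1 : x = a S
      · exact Set.mem_insert_iff.2 (Or.inl h1)
      · by_cases h2 : r (a S) x
        · exact Set.mem_insert_iff.2 (Or.inr (Or.inl ⟨hx, h1, h2⟩))
        · exact Set.mem_insert_iff.2 (Or.inr (Or.inr ⟨hx, h1, h2⟩))
    exact ((hg.union hb).insert (a S)).subset hcover |>.not_infinite S.2.1
  let next : T → T := fun S =>
    if hg : (good S).Infinite then ⟨good S, hg, fun x hx => S.2.2 hx.1⟩
    else ⟨bad S, hinf S hg, fun x hx => S.2.2 hx.1⟩
  let seq : ℕ → T := fun n => next^[n] ⟨A, hA, subset_rfl⟩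
  have hseq : ∀ n, seq (n + 1) = next (seq n) := fun n =>
    Function.iterate_succ_apply' next n _
  have hstep : ∀ n x, x ∈ (seq (n+1)).1 → x ∈ (seq n).1 ∧ x ≠ a (seq n) := by
    intro n x hx
    rw [hseq] at hx
    by_cases hg : (good (seq n)).Infinite
    · simp only [next, dif_pos hg] at hx
      exact ⟨hx.1, hx.2.1⟩
    · simp only [next, dif_neg hg] at hx
      exact ⟨hx.1, hx.2.1⟩
  have hr : ∀ n, (good (seq n)).Infinite → ∀ x ∈ (seq (n+1)).1, r (a (seq n)) x := by
    intro n hg x hx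
    rw [hseq] at hx
    simp only [next, dif_pos hg] at hx
    exact hx.2.2
  have hnr : ∀ n, ¬ (good (seq n)).Infinite → ∀ x ∈ (seq (n+1)).1, ¬ r (a (seq n)) x := by
    intro n hg x hx
    rw [hseq] at hx
    simp only [next, dif_neg hg] at hx
    exact hx.2.2
  have hchain : ∀ m n, m ≤ n → (seq n).1 ⊆ (seq m).1 := by
    intro m n hmn
    induction n with
    | zero => simp_all
    | succ k ih =>
      rcases Nat.lt_or_ge m (k+1) with hlt | hge
      · intro x hx
        exact ih (Nat.lt_succ_iff.mp hlt) (hstep k x hx).1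
      · have : m = k + 1 := le_antisymm hmn hge
        subst this; exact fun x hx => hx
  set aa : ℕ → α := fun n => a (seq n) with haa
  have hmem : ∀ n, aa n ∈ (seq n).1 := fun n => ha (seq n)
  have hlt : ∀ m n, m < n → aa n ∈ (seq (m+1)).1 := fun m n h =>
    hchain (m+1) n h (hmem n)
  have hne : ∀ m n, m < n → aa n ≠ aa m := fun m n h =>
    (hstep m (aa n) (hlt m n h)).2
  have hainj : Function.Injective aa := by
    intro m n hmn
    by_contra hne'
    rcases lt_or_gt_of_ne hne' with h' | h'
    · exact hne m n h' hmn.symm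
    · exact hne n m h' hmn
  have hAsub : ∀ n, aa n ∈ A := fun n => (seq n).2.2 (hmem n)
  set B := {n : ℕ | (good (seq n)).Infinite} with hB
  by_cases hBinf : B.Infinite
  · refine ⟨aa '' B, ?_, ?_, ?_⟩
    · rintro x ⟨n, _, rfl⟩; exact hAsub n
    · exact hBinf.image (hainj.injOn)
    · rintro x ⟨m, hm, rfl⟩ y ⟨n, hn, rfl⟩ hxy
      have hmn : m ≠ n := fun h => hxy (by rw [h])
      rcases lt_or_gt_of_ne hmn with h' | h'
      · exact hr m hm _ (hlt m n h')
      · exact hsym _ _ (hr n hn _ (hlt n m h'))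
  · exfalso
    rw [Set.not_infinite] at hBinf
    have hBc : Bᶜ.Infinite := hBinf.infinite_compl
    obtain ⟨x, hx, y, hy, hxy, hrxy⟩ := h (aa '' Bᶜ) (hBc.image hainj.injOn)
    obtain ⟨m, hm, rfl⟩ := hx
    obtain ⟨n, hn, rfl⟩ := hy
    have hmn : m ≠ n := fun h => hxy (by rw [h])
    rcases lt_or_gt_of_ne hmn with h' | h'
    · exact hnr m hm _ (hlt m n h') hrxy
    · exact hnr n hn _ (hlt n m h') (hsym _ _ hrxy)

/-- If every infinite subset of an infinite group `G` contains two distinct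
commuting elements, and moreover any two infinite subsets `X, Y ⊆ G` contain a
commuting pair `x ∈ X`, `y ∈ Y`, then `G` is abelian. -/
theorem abelian_of_commuting_pairs_in_infinite_subsets
    {G : Type*} [Group G] [Infinite G]
    (h₁ : ∀ X : Set G, X.Infinite → ∃ x ∈ X, ∃ y ∈ X, x ≠ y ∧ x * y = y * x)
    (h₂ : ∀ X Y : Set G, X.Infinite → Y.Infinite →
      ∃ x ∈ X, ∃ y ∈ Y, x * y = y * x) :
    ∀ a b : G, a * b = b * a := by
  classical
  have hsym : ∀ x y : G, x * y = y * x → y * x = x * y := fun x y h => h.symm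
  -- Ramsey lemma specialized
  have ramsey : ∀ A : Set G, A.Infinite →
      ∃ S : Set G, S ⊆ A ∧ S.Infinite ∧ ∀ x ∈ S, ∀ y ∈ S, x * y = y * x := by
    intro A hA
    obtain ⟨S, hSA, hSinf, hS⟩ :=
      exists_infinite_pairwise_rel (fun x y => x * y = y * x) hsym h₁ hA
    refine ⟨S, hSA, hSinf, fun x hx y hy => ?_⟩
    by_cases hxy : x = y
    · rw [hxy]
    · exact hS x hx y hy hxy
  -- Key: no infinite pairwise-commuting set can avoid the centralizer of `b`
  have K : ∀ (b : G) (A : Set G), A.Infinite →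
      (∀ x ∈ A, ∀ y ∈ A, x * y = y * x) →
      (∀ x ∈ A, ¬ x * b = b * x) → False := by
    intro b A hA hcomm hnc
    obtain ⟨x, hx, y, hy, hxy⟩ := h₂ ((b * ·) '' A) A
      (hA.image (mul_right_injective b).injOn) hA
    obtain ⟨z, hz, rfl⟩ := hx
    -- hxy : (b * z) * y = y * (b * z)
    apply hnc y hy
    have h1 : z * y = y * z := hcomm z hz y hy
    have h2 : b * (y * z) = y * (b * z) := by
      calc b * (y * z) = b * (z * y) := by rw [h1]
        _ = (b * z) * y := by rw [mul_assoc]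
        _ = y * (b * z) := hxy
    have h3 : (b * y) * z = (y * b) * z := by
      rw [mul_assoc, mul_assoc, h2]
    have := mul_right_cancel h3
    rw [this]
  -- centralizers are infinite
  have cenInf : ∀ b : G, {x : G | x * b = b * x}.Infinite := by
    intro b
    by_contra hfin
    rw [Set.not_infinite] at hfin
    obtain ⟨S, hSsub, hSinf, hScomm⟩ := ramsey _ hfin.infinite_compl
    exact K b S hSinf hScomm (fun x hx => hSsub hx)
  -- intersections of two centralizers are infinite
  have cen2 : ∀ a b : G,
      ({x : G | x * a = a * x} ∩ {x : G | x * b = b * x}).Infinite := by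
    intro a b
    by_contra hfin
    rw [Set.not_infinite] at hfin
    have hdiff : ({x : G | x * a = a * x} \ {x : G | x * b = b * x}).Infinite := by
      by_contra h2
      rw [Set.not_infinite] at h2
      have := (hfin.union h2).subset
        (Set.inter_union_diff {x : G | x * a = a * x} {x : G | x * b = b * x}).symm.subset
      exact this.not_infinite (cenInf a)
    obtain ⟨S, hSsub, hSinf, hScomm⟩ := ramsey _ hdiff
    exact K b S hSinf hScomm (fun x hx => (hSsub hx).2)
  -- final argument
  intro a b
  obtain ⟨S, hSsub, hSinf, hScomm⟩ := ramsey _ (cen2 a b)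
  obtain ⟨x, hx, y, hy, hxy⟩ := h₂ ((a * ·) '' S) ((b * ·) '' S)
    (hSinf.image (mul_right_injective a).injOn)
    (hSinf.image (mul_right_injective b).injOn)
  obtain ⟨z, hz, rfl⟩ := hx
  obtain ⟨w, hw, rfl⟩ := hy
  simp only at hxy
  -- hxy : (a * z) * (b * w) = (b * w) * (a * z)
  have hzb : z * b = b * z := (hSsub hz).2
  have hwa : w * a = a * w := (hSsub hw).1
  have hzw : z * w = w * z := hScomm z hz w hw
  have key : (a * b) * (z * w) = (b * a) * (z * w) := by
    calc (a * b) * (z * w) = a * (b * (z * w)) := by rw [mul_assoc]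
      _ = a * ((b * z) * w) := by rw [mul_assoc]
      _ = a * ((z * b) * w) := by rw [hzb]
      _ = (a * z) * (b * w) := by simp only [mul_assoc]
      _ = (b * w) * (a * z) := hxy
      _ = b * ((w * a) * z) := by rw [mul_assoc, mul_assoc]
      _ = b * ((a * w) * z) := by rw [hwa]
      _ = b * (a * (w * z)) := by rw [mul_assoc]
      _ = b * (a * (z * w)) := by rw [hzw]
      _ = (b * a) * (z * w) := by rw [← mul_assoc]
  exact mul_right_cancel key
end

section
/- The free product of two nontrivial groups, at least one of which has order greater than 2, contains a nonabelian free subgroup. -/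
/-!
Pick nontrivial `a ≠ a'` in `A` and `b ≠ 1` in `B`, and let `A ∗ B` act on reduced words.
Then `x = a b a' b` and `y = a' b a b` play ping-pong on the sets of words beginning with `a b`,
`a' b`, `b⁻¹ a'⁻¹` and `b⁻¹ a⁻¹`. For instance, if `w` does not begin with `b⁻¹ a'⁻¹`, then in
`x w` the only possible cancellation is of `b` against a leading `b⁻¹`, after which `a'` merges
with the next letter without cancelling it, so `x w` begins with `a b`.
-/

universe u v

open Monoid CoprodI

theorem exists_pair_ne_one_of_card {C : Type*} [One C] (h : 3 ≤ Nat.card C ∨ Nat.card C = 0) :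
    ∃ c c' : C, c ≠ 1 ∧ c' ≠ 1 ∧ c ≠ c' := by
  by_contra! hC
  have hS : {c : C | c ≠ 1}.Subsingleton := fun c hc c' hc' => hC c c' hc hc'
  have huniv : Set.univ = insert (1 : C) {c | c ≠ 1} := by ext c; simp [em]
  have : Finite C := Set.finite_univ_iff.mp (huniv ▸ hS.finite.insert 1)
  have hcard : Nat.card C ≤ 2 := by
    rw [← Set.ncard_univ, huniv]
    exact (Set.ncard_insert_le _ _).trans (Nat.succ_le_succ ((Set.ncard_le_one hS.finite).mpr hS))
  have := Nat.card_pos (α := C)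
  omega

-- Mathlib's `FreeGroup.injective_lift_of_ping_pong` needs `ι` and `G` in the same universe.
open Pointwise in
theorem FreeGroup.injective_lift_of_ping_pong' {ι : Type} [Nontrivial ι] {G : Type*} [Group G]
    (a : ι → G) {α : Type*} [MulAction G α] (X Y : ι → Set α)
    (hXnonempty : ∀ i, (X i).Nonempty) (hXdisj : Pairwise (Function.onFun Disjoint X))
    (hYdisj : Pairwise (Function.onFun Disjoint Y)) (hXYdisj : ∀ i j, Disjoint (X i) (Y j))
    (hX : ∀ i, a i • (Y i)ᶜ ⊆ X i) (hY : ∀ i, (a i)⁻¹ • (X i)ᶜ ⊆ Y i) :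
    Function.Injective (FreeGroup.lift a) := by
  have hlift := FreeGroup.injective_lift_of_ping_pong (a ∘ ULift.down) (X ∘ ULift.down)
    (Y ∘ ULift.down) (fun i => hXnonempty i.down)
    (fun i j hij => hXdisj (ULift.down_injective.ne hij))
    (fun i j hij => hYdisj (ULift.down_injective.ne hij))
    (fun i j => hXYdisj i.down j.down) (fun i => hX i.down) (fun i => hY i.down)
  have hcomp : FreeGroup.lift a = (FreeGroup.lift (a ∘ ULift.down)).comp
      (FreeGroup.freeGroupCongr Equiv.ulift.symm).toMonoidHom := by
    ext; simp
  rw [hcomp]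
  exact hlift.comp (FreeGroup.freeGroupCongr _).injective

namespace Monoid.CoprodI.Word

section Monoid

variable {ι : Type*} [DecidableEq ι] {M : ι → Type*} [∀ i, Monoid (M i)] [∀ i, DecidableEq (M i)]

theorem toList_of_smul_of_fstIdx_ne {i : ι} {m : M i} (hm : m ≠ 1) {w : Word M}
    (hw : w.fstIdx ≠ some i) : (of m • w).toList = ⟨i, m⟩ :: w.toList := by
  rw [← cons_eq_smul (h1 := hw) (h2 := hm), cons_toList]

theorem of_smul_cons {i : ι} (m m' : M i) (w : Word M) (h1 : w.fstIdx ≠ some i) (h2 : m' ≠ 1) :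
    of m • cons m' w h1 h2 = of (m * m') • w := by
  rw [cons_eq_smul, smul_smul, ← map_mul]

end Monoid

variable {ι : Type*} [DecidableEq ι] {G : ι → Type*} [∀ i, Group (G i)] [∀ i, DecidableEq (G i)]

theorem fstIdx_of_smul {i : ι} {g : G i} (hg : g ≠ 1) {w : Word G}
    (hw : w.toList.head? ≠ some ⟨i, g⁻¹⟩) : (of g • w).fstIdx = some i := by
  induction w using consRecOn with
  | empty => simp [fstIdx, toList_of_smul_of_fstIdx_ne hg (w := empty) (by simp [fstIdx, empty])]
  | cons k m w h1 h2 _ =>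
    by_cases hk : k = i
    · subst hk
      have hgm : g * m ≠ 1 := fun h => hw (by simp [eq_inv_of_mul_eq_one_right h])
      rw [of_smul_cons, fstIdx, toList_of_smul_of_fstIdx_ne hgm h1]
      rfl
    · simp [fstIdx, toList_of_smul_of_fstIdx_ne hg (w := cons m w h1 h2) (by simpa using hk)]

theorem head?_of_smul_ne {i j : ι} (hij : i ≠ j) {g : G j} (hg : g ≠ 1) {h : G i} {w : Word G}
    (hw : w.toList.take 2 ≠ [⟨j, g⁻¹⟩, ⟨i, h⟩]) : (of g • w).toList.head? ≠ some ⟨i, h⟩ := by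
  induction w using consRecOn with
  | empty => simp [toList_of_smul_of_fstIdx_ne hg (w := empty) (by simp [fstIdx, empty]), hij.symm]
  | cons k m w h1 h2 _ =>
    by_cases hk : k = j
    · subst hk
      rw [of_smul_cons]
      by_cases hgm : g * m = 1
      · rw [hgm, map_one, one_smul]
        obtain rfl := eq_inv_of_mul_eq_one_right hgm
        intro hhead
        obtain ⟨t, ht⟩ := List.head?_eq_some_iff.mp hhead
        simp [ht] at hw
      · rw [toList_of_smul_of_fstIdx_ne hgm h1]
        simp [hij.symm]
    · simp [toList_of_smul_of_fstIdx_ne hg (w := cons m w h1 h2) (by simpa using hk), hij.symm]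

theorem take_two_toList_smul {i j : ι} (hij : i ≠ j) {p r : G i} {q s : G j}
    (hp : p ≠ 1) (hq : q ≠ 1) (hr : r ≠ 1) (hs : s ≠ 1) {w : Word G}
    (hw : w.toList.take 2 ≠ [⟨j, s⁻¹⟩, ⟨i, r⁻¹⟩]) :
    ((of p * of q * of r * of s) • w).toList.take 2 = [⟨i, p⟩, ⟨j, q⟩] := by
  have h₂ : (of r • of s • w).fstIdx = some i := fstIdx_of_smul hr (head?_of_smul_ne hij hs hw)
  have h₃ := toList_of_smul_of_fstIdx_ne hq (w := of r • of s • w) (by simpa [h₂] using hij)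
  rw [mul_smul, mul_smul, mul_smul,
    toList_of_smul_of_fstIdx_ne hp (by simpa [fstIdx, h₃] using hij.symm), h₃]
  simp

end Monoid.CoprodI.Word

open Pointwise in
theorem Monoid.CoprodI.injective_freeGroup_lift_of_ne {ι : Type*} {G : ι → Type*}
    [∀ i, Group (G i)] {i j : ι} (hij : i ≠ j) {a a' : G i} (ha : a ≠ 1) (ha' : a' ≠ 1)
    (haa' : a ≠ a') {b : G j} (hb : b ≠ 1) :
    Function.Injective
      (FreeGroup.lift ![of a * of b * of a' * of b, of a' * of b * of a * of b]) := by
  classical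
  let S (u v : Σ k, G k) : Set (Word G) := {w | w.toList.take 2 = [u, v]}
  have hS {u v u' v'} (h : [u, v] ≠ [u', v']) : Disjoint (S u v) (S u' v') :=
    Set.disjoint_left.mpr fun _ hw hw' => h (hw.symm.trans hw')
  have hX {c c' : G i} (hc : c ≠ 1) (hc' : c' ≠ 1) :
      (of c * of b * of c' * of b) • (S ⟨j, b⁻¹⟩ ⟨i, c'⁻¹⟩)ᶜ ⊆ S ⟨i, c⟩ ⟨j, b⟩ := by
    rintro _ ⟨w, hw, rfl⟩
    exact Word.take_two_toList_smul hij hc hb hc' hb hw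
  have hY {c c' : G i} (hc : c ≠ 1) (hc' : c' ≠ 1) :
      (of c * of b * of c' * of b)⁻¹ • (S ⟨i, c⟩ ⟨j, b⟩)ᶜ ⊆ S ⟨j, b⁻¹⟩ ⟨i, c'⁻¹⟩ := by
    rintro _ ⟨w, hw, rfl⟩
    simp only [mul_inv_rev, ← map_inv, ← mul_assoc]
    refine Word.take_two_toList_smul hij.symm (inv_ne_one.mpr hb) (inv_ne_one.mpr hc')
      (inv_ne_one.mpr hb) (inv_ne_one.mpr hc) ?_
    simpa [S] using hw
  have hempty {u v : Σ k, G k} : Word.empty ∈ (S u v)ᶜ := by simp [S, Word.empty]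
  refine FreeGroup.injective_lift_of_ping_pong' _
    ![S ⟨i, a⟩ ⟨j, b⟩, S ⟨i, a'⟩ ⟨j, b⟩] ![S ⟨j, b⁻¹⟩ ⟨i, a'⁻¹⟩, S ⟨j, b⁻¹⟩ ⟨i, a⁻¹⟩]
    ?_ ?_ ?_ ?_ ?_ ?_
  · intro k
    fin_cases k
    · exact ⟨_, hX ha ha' (Set.smul_mem_smul_set hempty)⟩
    · exact ⟨_, hX ha' ha (Set.smul_mem_smul_set hempty)⟩
  · intro k l hkl
    fin_cases k <;> fin_cases l
    all_goals first | exact (hkl rfl).elim | exact hS (by simp [haa', haa'.symm])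
  · intro k l hkl
    fin_cases k <;> fin_cases l
    all_goals first | exact (hkl rfl).elim | exact hS (by simp [haa', haa'.symm])
  · intro k l
    fin_cases k <;> fin_cases l <;> exact hS (by simp [hij])
  · intro k
    fin_cases k
    exacts [hX ha ha', hX ha' ha]
  · intro k
    fin_cases k
    exacts [hY ha ha', hY ha' ha]

namespace Monoid.Coprod

-- `A ∗ B` as a coproduct indexed by `Bool`, whose reduced words give normal forms; the `ULift`s
-- put both factors in one universe.
abbrev factors (A : Type u) (B : Type v) : Bool → Type (max u v) :=
  fun t => cond t (ULift A) (ULift B)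

instance (A : Type u) (B : Type v) [Group A] [Group B] : ∀ t, Group (factors A B t)
  | true => inferInstanceAs (Group (ULift A))
  | false => inferInstanceAs (Group (ULift B))

theorem injective_freeGroup_lift_of_ne {A : Type u} {B : Type v} [Group A] [Group B]
    {a a' : A} (ha : a ≠ 1) (ha' : a' ≠ 1) (haa' : a ≠ a') {b : B} (hb : b ≠ 1) :
    Function.Injective (FreeGroup.lift
      ![inl a * inr b * inl a' * inr b, inl a' * inr b * inl a * inr b]) := by
  let φ : A ∗ B →* CoprodI (factors A B) :=
    lift ((CoprodI.of (i := true)).comp MulEquiv.ulift.symm.toMonoidHom)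
      ((CoprodI.of (i := false)).comp MulEquiv.ulift.symm.toMonoidHom)
  have hφ := CoprodI.injective_freeGroup_lift_of_ne (G := factors A B) (i := true) (j := false)
    (by decide) (a := ULift.up a) (a' := ULift.up a') (b := ULift.up b)
    (ULift.up_injective.ne ha) (ULift.up_injective.ne ha') (ULift.up_injective.ne haa')
    (ULift.up_injective.ne hb)
  refine Function.Injective.of_comp (f := φ) ?_
  rw [← MonoidHom.coe_comp]
  convert hφ using 3
  ext k
  fin_cases k <;> simp [φ] <;> rfl

end Monoid.Coprod

/-- The free product of two nontrivial groups, at least one of which has order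
greater than `2` (possibly infinite), contains a nonabelian free subgroup:
there is an injective homomorphism from the free group of rank two into
`A * B`. -/
theorem free_subgroup_of_coprod
    {A B : Type*} [Group A] [Group B] [Nontrivial A] [Nontrivial B]
    (h : 3 ≤ Nat.card A ∨ Nat.card A = 0 ∨ 3 ≤ Nat.card B ∨ Nat.card B = 0) :
    ∃ f : FreeGroup (Fin 2) →* Monoid.Coprod A B, Function.Injective f := by
  obtain hA | hB := or_assoc.mpr h
  · obtain ⟨a, a', ha, ha', haa'⟩ := exists_pair_ne_one_of_card hA
    obtain ⟨b, hb⟩ := exists_ne (1 : B)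
    exact ⟨_, Coprod.injective_freeGroup_lift_of_ne ha ha' haa' hb⟩
  · obtain ⟨b, b', hb, hb', hbb'⟩ := exists_pair_ne_one_of_card hB
    obtain ⟨a, ha⟩ := exists_ne (1 : A)
    exact ⟨(Coprod.swap B A).comp _,
      Coprod.swap_injective.comp (Coprod.injective_freeGroup_lift_of_ne hb hb' hbb' ha)⟩
end

section
/- If a group G has a finite-index subgroup H that is SQ-universal, then G is SQ-universal. -/
/-- `S` embeds into a quotient of `G`. -/
def EmbedsInQuotient (S : Type) (G : Type*) [Group S] [Group G] : Prop :=
  ∃ N : Subgroup G, N.Normal ∧ ∃ f : S → G,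
    Function.Injective (fun s => (QuotientGroup.mk (f s) : G ⧸ N)) ∧
    ∀ a b : S, (QuotientGroup.mk (f a * f b) : G ⧸ N) = QuotientGroup.mk (f (a * b))

/-- A group is SQ-universal if every countable group embeds into some quotient
of it. -/
def SQUniversal (G : Type*) [Group G] : Prop :=
  ∀ (S : Type) [Group S] [Countable S], EmbedsInQuotient S G

open Equiv Set Pointwise

namespace SQU



/-! ### Support of permutations of ℕ, and the finitary subgroup -/

def supp (σ : Equiv.Perm ℕ) : Set ℕ := {x | σ x ≠ x}

lemma mem_supp {σ : Equiv.Perm ℕ} {x : ℕ} : x ∈ supp σ ↔ σ x ≠ x := Iff.rfl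

lemma supp_mul_subset (σ τ : Equiv.Perm ℕ) : supp (σ * τ) ⊆ supp σ ∪ supp τ := by
  intro x hx
  by_cases h : τ x = x
  · left; simpa [mem_supp, Equiv.Perm.mul_apply, h] using hx
  · right; exact h

lemma supp_inv (σ : Equiv.Perm ℕ) : supp σ⁻¹ = σ '' supp σ := by
  ext x
  constructor
  · intro hx
    refine ⟨σ⁻¹ x, ?_, by simp⟩
    simp only [mem_supp] at hx ⊢
    intro h
    apply hx
    conv_lhs => rw [← h]
    simp
  · rintro ⟨y, hy, rfl⟩
    simp only [mem_supp] at hy ⊢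
    simpa using fun h => hy h.symm

lemma supp_conj (τ σ : Equiv.Perm ℕ) : supp (τ * σ * τ⁻¹) = τ '' supp σ := by
  ext x
  constructor
  · intro hx
    refine ⟨τ⁻¹ x, ?_, by simp⟩
    simp only [mem_supp, Equiv.Perm.mul_apply] at hx ⊢
    intro h
    exact hx (by rw [h]; simp)
  · rintro ⟨y, hy, rfl⟩
    simp only [mem_supp, Equiv.Perm.mul_apply] at hy ⊢
    simpa using fun h => hy (τ.injective h)

lemma supp_one : supp (1 : Equiv.Perm ℕ) = ∅ := by
  ext x; simp [mem_supp]

/-- The subgroup of finitely supported permutations of `ℕ`. -/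
def FS : Subgroup (Equiv.Perm ℕ) where
  carrier := {σ | (supp σ).Finite}
  one_mem' := by simp [supp_one]
  mul_mem' := by
    intro a b ha hb
    exact ((ha.union hb).subset (supp_mul_subset a b))
  inv_mem' := by
    intro a ha
    simpa [supp_inv] using ha.image _

instance FS_normal : FS.Normal := by
  constructor
  intro σ hσ τ
  show (supp _).Finite
  have : τ * σ * τ⁻¹ = τ * σ * τ⁻¹ := rfl
  rw [supp_conj]
  exact hσ.image _

lemma mem_FS_iff {σ : Equiv.Perm ℕ} : σ ∈ FS ↔ (supp σ).Finite := Iff.rfl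

/-! ### Gluing partial injections to permutations -/

lemma exists_perm_extend {A : Set ℕ} {f : ℕ → ℕ} (hinj : Set.InjOn f A)
    (h1 : (Aᶜ).Infinite) (h2 : ((f '' A)ᶜ).Infinite) :
    ∃ σ : Equiv.Perm ℕ, ∀ x ∈ A, σ x = f x := by
  classical
  have h1' : Infinite ↥(Aᶜ) := h1.to_subtype
  have h2' : Infinite ↥((f '' A)ᶜ) := h2.to_subtype
  have d1 : Denumerable ↥(Aᶜ) := Nat.Subtype.denumerable _
  have d2 : Denumerable ↥((f '' A)ᶜ) := Nat.Subtype.denumerable _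
  let e1 : ↥A ≃ ↥(f '' A) := Equiv.Set.imageOfInjOn f A hinj
  let e2 : ↥(Aᶜ) ≃ ↥((f '' A)ᶜ) := (d1.eqv).trans (d2.eqv).symm
  refine ⟨((Equiv.Set.sumCompl A).symm.trans ((e1.sumCongr e2).trans
    (Equiv.Set.sumCompl (f '' A)))), ?_⟩
  intro x hx
  simp only [Equiv.trans_apply]
  rw [Set.sumCompl_symm_apply_of_mem hx]
  rfl

/-! ### Greedy avoiding sequences -/

noncomputable def pickFresh (s : Set ℕ) (hs : s.Infinite) (t : Finset ℕ) : ℕ :=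
  ((hs.diff t.finite_toSet).nonempty).some

lemma pickFresh_mem (s : Set ℕ) (hs : s.Infinite) (t : Finset ℕ) :
    pickFresh s hs t ∈ s \ ↑t :=
  ((hs.diff t.finite_toSet).nonempty).some_mem

noncomputable def badset (gs : List (ℕ → ℕ)) (l : List ℕ) : Finset ℕ :=
  (l.flatMap (fun y => gs.map (fun g => g y))).toFinset

lemma mem_badset {gs : List (ℕ → ℕ)} {l : List ℕ} {z : ℕ} :
    z ∈ badset gs l ↔ ∃ y ∈ l, ∃ g ∈ gs, g y = z := by
  simp [badset, List.mem_flatMap, eq_comm]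

noncomputable def seqList (s : Set ℕ) (hs : s.Infinite) (gs : List (ℕ → ℕ)) : ℕ → List ℕ
  | 0 => []
  | (n+1) => (seqList s hs gs n) ++ [pickFresh s hs (badset gs (seqList s hs gs n))]

noncomputable def seqAvoid (s : Set ℕ) (hs : s.Infinite) (gs : List (ℕ → ℕ)) (n : ℕ) : ℕ :=
  pickFresh s hs (badset gs (seqList s hs gs n))

lemma seqList_succ (s : Set ℕ) (hs : s.Infinite) (gs : List (ℕ → ℕ)) (n : ℕ) :
    seqList s hs gs (n+1) = seqList s hs gs n ++ [seqAvoid s hs gs n] := rfl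

lemma mem_seqList {s : Set ℕ} {hs : s.Infinite} {gs : List (ℕ → ℕ)} {m n : ℕ} (h : m < n) :
    seqAvoid s hs gs m ∈ seqList s hs gs n := by
  induction n with
  | zero => omega
  | succ k ih =>
    rw [seqList_succ]
    rcases Nat.lt_succ_iff_lt_or_eq.mp h with h' | h'
    · exact List.mem_append_left _ (ih h')
    · subst h'; exact List.mem_append_right _ (by simp)

lemma seqAvoid_mem (s : Set ℕ) (hs : s.Infinite) (gs : List (ℕ → ℕ)) (n : ℕ) :
    seqAvoid s hs gs n ∈ s :=
  (pickFresh_mem s hs _).1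

lemma seqAvoid_avoid {s : Set ℕ} {hs : s.Infinite} {gs : List (ℕ → ℕ)} {m n : ℕ}
    (h : m < n) {g : ℕ → ℕ} (hg : g ∈ gs) :
    seqAvoid s hs gs n ≠ g (seqAvoid s hs gs m) := by
  intro hEq
  have h2 := (pickFresh_mem s hs (badset gs (seqList s hs gs n))).2
  apply h2
  show seqAvoid s hs gs n ∈ _
  rw [hEq]
  exact Finset.mem_coe.mpr (mem_badset.mpr ⟨_, mem_seqList h, g, hg, rfl⟩)




/-! ### Words of conjugates -/

def ncword {Γ : Type*} [Group Γ] (a : Γ) (l : List (Γ × Bool)) : Γ :=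
  (l.map (fun p => p.1 * (if p.2 then a else a⁻¹) * p.1⁻¹)).prod

lemma ncword_nil {Γ : Type*} [Group Γ] (a : Γ) : ncword a [] = 1 := rfl

lemma ncword_cons {Γ : Type*} [Group Γ] (a : Γ) (p : Γ × Bool) (l : List (Γ × Bool)) :
    ncword a (p :: l) = p.1 * (if p.2 then a else a⁻¹) * p.1⁻¹ * ncword a l := by
  simp [ncword]

lemma ncword_append {Γ : Type*} [Group Γ] (a : Γ) (l₁ l₂ : List (Γ × Bool)) :
    ncword a (l₁ ++ l₂) = ncword a l₁ * ncword a l₂ := by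
  simp [ncword]

lemma ncword_conj {Γ : Type*} [Group Γ] (a g : Γ) (l : List (Γ × Bool)) :
    g * ncword a l * g⁻¹ = ncword a (l.map (fun p => (g * p.1, p.2))) := by
  induction l with
  | nil => simp [ncword]
  | cons p l ih =>
    rw [List.map_cons, ncword_cons, ncword_cons]
    have : g * (p.1 * (if p.2 then a else a⁻¹) * p.1⁻¹ * ncword a l) * g⁻¹
        = (g * p.1 * (if p.2 then a else a⁻¹) * p.1⁻¹ * g⁻¹) * (g * ncword a l * g⁻¹) := by
      group
    rw [this, ih]
    congr 1
    group

lemma ncword_mem {Γ : Type*} [Group Γ] {a : Γ} {W : Subgroup Γ} (hW : W.Normal)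
    (ha : a ∈ W) (l : List (Γ × Bool)) : ncword a l ∈ W := by
  induction l with
  | nil => exact W.one_mem
  | cons p l ih =>
    rw [ncword_cons]
    refine W.mul_mem (hW.conj_mem _ ?_ _) ih
    by_cases h : p.2 <;> simp [h, ha, W.inv_mem ha]

lemma ncword_map {Γ Δ : Type*} [Group Γ] [Group Δ] (φ : Γ →* Δ) (a : Γ)
    (l : List (Γ × Bool)) :
    φ (ncword a l) = ncword (φ a) (l.map (fun p => (φ p.1, p.2))) := by
  induction l with
  | nil => simp [ncword]
  | cons p l ih =>
    rw [List.map_cons, ncword_cons, ncword_cons, map_mul, map_mul, map_mul, ih, map_inv]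
    congr 2
    by_cases h : p.2 <;> simp [h]

/-! ### Extending an indexed permutation by the identity -/

lemma exists_perm_indexed {ι : Type} (w : ι → ℕ) (hw : Function.Injective w)
    (β : Equiv.Perm ι) :
    ∃ B : Equiv.Perm ℕ, (∀ i, B (w i) = w (β i)) ∧ ∀ x, x ∉ Set.range w → B x = x := by
  classical
  refine ⟨β.extendDomain (Equiv.ofInjective w hw), fun i => ?_, fun x hx => ?_⟩
  · exact Equiv.Perm.extendDomain_apply_image β (Equiv.ofInjective w hw) i
  · exact Equiv.Perm.extendDomain_apply_not_subtype β (Equiv.ofInjective w hw) hx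

/-! ### Gluing two injective enumerations -/

lemma exists_perm_glue {ι : Type} [Nonempty ι] (u v : ι → ℕ)
    (hu : Function.Injective u) (hv : Function.Injective v)
    (hcu : (Set.range u)ᶜ.Infinite) (hcv : (Set.range v)ᶜ.Infinite) :
    ∃ σ : Equiv.Perm ℕ, ∀ i, σ (u i) = v i := by
  classical
  have hli : ∀ i, Function.invFun u (u i) = i := fun i => Function.leftInverse_invFun hu i
  have hinj : Set.InjOn (fun z => v (Function.invFun u z)) (Set.range u) := by
    rintro x ⟨i, rfl⟩ y ⟨j, rfl⟩ h
    simp only [hli] at h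
    exact congrArg u (hv h)
  have himg : (fun z => v (Function.invFun u z)) '' Set.range u = Set.range v := by
    ext z
    constructor
    · rintro ⟨x, ⟨i, rfl⟩, rfl⟩
      exact ⟨Function.invFun u (u i), rfl⟩
    · rintro ⟨i, rfl⟩
      exact ⟨u i, ⟨i, rfl⟩, by simp only [hli]⟩
  obtain ⟨σ, hσ⟩ := exists_perm_extend hinj hcu (by rw [himg]; exact hcv)
  refine ⟨σ, fun i => ?_⟩
  rw [hσ (u i) ⟨i, rfl⟩]
  show v (Function.invFun u (u i)) = v i
  simp only [hli]




/-! ### The ladder construction -/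

lemma exists_ladder (a : Equiv.Perm ℕ) (ha : (supp a).Infinite) :
    ∃ (q : ℕ → ℕ → ℕ) (τ : Equiv.Perm ℕ),
      (∀ i k j l, q i k = q j l → i = j ∧ k = l) ∧
      (∀ i k, (a * (τ * a * τ⁻¹)) (q i k) = q i (k + 1)) := by
  classical
  set gs : List (ℕ → ℕ) := [id, ⇑a, ⇑a⁻¹] with hgs
  set x : ℕ → ℕ := seqAvoid (supp a) ha gs with hx
  have hxsupp : ∀ n, a (x n) ≠ x n := fun n => seqAvoid_mem (supp a) ha gs n
  have hid : (id : ℕ → ℕ) ∈ gs := by rw [hgs]; simp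
  have hag : (⇑a : ℕ → ℕ) ∈ gs := by rw [hgs]; simp
  have haig : (⇑a⁻¹ : ℕ → ℕ) ∈ gs := by rw [hgs]; simp
  have H1 : ∀ {m n : ℕ}, x n = x m → n = m := by
    intro m n h
    rcases lt_trichotomy m n with hlt | rfl | hlt
    · exact absurd h (seqAvoid_avoid (g := id) hlt hid)
    · rfl
    · exact absurd h.symm (seqAvoid_avoid (g := id) hlt hid)
  have H2 : ∀ {m n : ℕ}, x n = a (x m) → False := by
    intro m n h
    rcases lt_trichotomy m n with hlt | rfl | hlt
    · exact seqAvoid_avoid hlt hag h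
    · exact hxsupp m h.symm
    · have : x m = a⁻¹ (x n) := by
        have := congrArg (⇑a⁻¹) h
        simpa using this.symm
      exact seqAvoid_avoid hlt haig this
  -- points
  set p : ℕ → ℕ → ℕ := fun i k => x (2 * Nat.pair i k + 1) with hp
  set q : ℕ → ℕ → ℕ := fun i k => a (p i k) with hq
  set r : ℕ → ℕ := fun j => x (2 * j) with hr
  have pinj : ∀ {i k j l}, p i k = p j l → i = j ∧ k = l := by
    intro i k j l h
    have h' := H1 h
    have hpq : Nat.pair i k = Nat.pair j l := by omega
    exact Nat.pair_eq_pair.mp hpq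
  have qinj : ∀ i k j l, q i k = q j l → i = j ∧ k = l := by
    intro i k j l h
    exact pinj (a.injective h)
  have pq : ∀ {i k j l}, p i k ≠ q j l := fun h => H2 h
  have rp : ∀ {j i k}, r j ≠ p i k := by
    intro j i k h
    have := H1 h
    omega
  have rq : ∀ {j i k}, r j ≠ q i k := fun h => H2 h
  have rinj : Function.Injective r := by
    intro i j h
    have := H1 h
    omega
  -- build τ
  set u : (ℕ × ℕ) ⊕ (ℕ × ℕ) → ℕ :=
    Sum.elim (fun ik => p ik.1 ik.2) (fun ik => q ik.1 ik.2) with hu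
  set v : (ℕ × ℕ) ⊕ (ℕ × ℕ) → ℕ :=
    Sum.elim (fun ik => q ik.1 ik.2) (fun ik => p ik.1 (ik.2 + 1)) with hv
  have huinj : Function.Injective u := by
    rintro (⟨i, k⟩ | ⟨i, k⟩) (⟨j, l⟩ | ⟨j, l⟩) h <;> simp only [hu, Sum.elim_inl, Sum.elim_inr] at h
    · obtain ⟨h1, h2⟩ := pinj h; subst h1; subst h2; rfl
    · exact absurd h pq
    · exact absurd h.symm pq
    · obtain ⟨h1, h2⟩ := qinj _ _ _ _ h; subst h1; subst h2; rfl
  have hvinj : Function.Injective v := by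
    rintro (⟨i, k⟩ | ⟨i, k⟩) (⟨j, l⟩ | ⟨j, l⟩) h <;> simp only [hv, Sum.elim_inl, Sum.elim_inr] at h
    · obtain ⟨h1, h2⟩ := qinj _ _ _ _ h; subst h1; subst h2; rfl
    · exact absurd h.symm pq
    · exact absurd h pq
    · obtain ⟨h1, h2⟩ := pinj h; subst h1
      have : k = l := by omega
      subst this; rfl
  have hcu : (Set.range u)ᶜ.Infinite := by
    apply Set.infinite_of_injective_forall_mem rinj
    intro j
    simp only [Set.mem_compl_iff, Set.mem_range, not_exists]
    rintro (⟨i, k⟩ | ⟨i, k⟩) h <;> simp only [hu, Sum.elim_inl, Sum.elim_inr] at h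
    · exact rp h.symm
    · exact rq h.symm
  have hcv : (Set.range v)ᶜ.Infinite := by
    apply Set.infinite_of_injective_forall_mem rinj
    intro j
    simp only [Set.mem_compl_iff, Set.mem_range, not_exists]
    rintro (⟨i, k⟩ | ⟨i, k⟩) h <;> simp only [hv, Sum.elim_inl, Sum.elim_inr] at h
    · exact rq h.symm
    · exact rp h.symm
  obtain ⟨τ, hτ⟩ := exists_perm_glue u v huinj hvinj hcu hcv
  have hτ1 : ∀ i k, τ (p i k) = q i k := fun i k => hτ (Sum.inl (i, k))
  have hτ2 : ∀ i k, τ (q i k) = p i (k + 1) := fun i k => hτ (Sum.inr (i, k))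
  refine ⟨q, τ, qinj, ?_⟩
  intro i k
  have hinv : τ⁻¹ (q i k) = p i k := by
    rw [← hτ1 i k]; simp
  show a (τ (a (τ⁻¹ (q i k)))) = q i (k + 1)
  rw [hinv]
  show a (τ (q i k)) = q i (k+1)
  rw [hτ2 i k]

/-! ### The swindle -/

lemma swindle (q : ℕ → ℕ → ℕ) (qinj : ∀ i k j l, q i k = q j l → i = j ∧ k = l)
    (e : Equiv.Perm ℕ) (he : ∀ i k, e (q i k) = q i (k + 1))
    (b' : Equiv.Perm ℕ) (hb' : supp b' ⊆ {z | ∃ i, q i 0 = z}) :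
    ∃ B : Equiv.Perm ℕ, b' = B * e * B⁻¹ * e⁻¹ := by
  classical
  set U₀ : Set ℕ := {z | ∃ i, q i 0 = z} with hU₀
  have hclosed : ∀ z, z ∈ U₀ → b' z ∈ U₀ := by
    intro z hz
    by_cases h : b' z = z
    · rwa [h]
    · apply hb'
      show b' (b' z) ≠ b' z
      intro hc
      exact h (b'.injective hc)
  have hclosed' : ∀ z, z ∈ U₀ → b'⁻¹ z ∈ U₀ := by
    intro z hz
    by_cases h : b'⁻¹ z = z
    · rwa [h]
    · apply hb'
      show b' (b'⁻¹ z) ≠ b'⁻¹ z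
      simp only [Equiv.Perm.coe_inv, Equiv.apply_symm_apply]
      exact fun hc => h hc.symm
  have hmem : ∀ i, ∃ j, q j 0 = b' (q i 0) := fun i => hclosed _ ⟨i, rfl⟩
  have hmem' : ∀ i, ∃ j, q j 0 = b'⁻¹ (q i 0) := fun i => hclosed' _ ⟨i, rfl⟩
  set βf : ℕ → ℕ := fun i => (hmem i).choose with hβf
  set βg : ℕ → ℕ := fun i => (hmem' i).choose with hβg
  have hβf' : ∀ i, q (βf i) 0 = b' (q i 0) := fun i => (hmem i).choose_spec
  have hβg' : ∀ i, q (βg i) 0 = b'⁻¹ (q i 0) := fun i => (hmem' i).choose_spec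
  have hgf : ∀ i, βg (βf i) = i := by
    intro i
    have : q (βg (βf i)) 0 = q i 0 := by
      rw [hβg', hβf']; simp
    exact (qinj _ _ _ _ this).1
  have hfg : ∀ i, βf (βg i) = i := by
    intro i
    have : q (βf (βg i)) 0 = q i 0 := by
      rw [hβf', hβg']; simp
    exact (qinj _ _ _ _ this).1
  set β : Equiv.Perm ℕ := ⟨βf, βg, hgf, hfg⟩ with hβ
  set w : ℕ × ℕ → ℕ := fun ik => q ik.1 ik.2 with hw
  have hwinj : Function.Injective w := by
    rintro ⟨i, k⟩ ⟨j, l⟩ h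
    obtain ⟨h1, h2⟩ := qinj _ _ _ _ h
    simp only [Prod.mk.injEq]
    exact ⟨h1, h2⟩
  obtain ⟨B, hB1, hB2⟩ := exists_perm_indexed w hwinj (β.prodCongr (Equiv.refl ℕ))
  have hBq : ∀ i k, B (q i k) = q (βf i) k := fun i k => hB1 (i, k)
  have hBinvq : ∀ i k, B⁻¹ (q i k) = q (βg i) k := by
    intro i k
    have : B (q (βg i) k) = q (βf (βg i)) k := hBq _ _
    rw [hfg] at this
    rw [← this]; simp
  have hBfix : ∀ z, z ∉ Set.range w → B z = z := hB2
  have hBinvfix : ∀ z, z ∉ Set.range w → B⁻¹ z = z := by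
    intro z hz
    have := hBfix z hz
    conv_lhs => rw [← this]
    simp
  have hEinv : ∀ z, z ∉ Set.range w → e⁻¹ z ∉ Set.range w := by
    rintro z hz ⟨⟨i, k⟩, hik⟩
    apply hz
    refine ⟨(i, k + 1), ?_⟩
    show q i (k+1) = z
    rw [← he i k]
    show e (q i k) = z
    rw [show q i k = e⁻¹ z from hik]
    simp
  have hEinv0 : ∀ i, e⁻¹ (q i 0) ∉ Set.range w := by
    rintro i ⟨⟨j, l⟩, hjl⟩
    have : e (q j l) = q i 0 := by
      rw [show q j l = e⁻¹ (q i 0) from hjl]; simp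
    rw [he j l] at this
    have := (qinj _ _ _ _ this).2
    omega
  refine ⟨B, ?_⟩
  ext z
  show b' z = B (e (B⁻¹ (e⁻¹ z)))
  by_cases hz : z ∈ Set.range w
  · obtain ⟨⟨i, k⟩, rfl⟩ := hz
    show b' (q i k) = B (e (B⁻¹ (e⁻¹ (q i k))))
    match k with
    | 0 =>
      have h1 : B⁻¹ (e⁻¹ (q i 0)) = e⁻¹ (q i 0) := hBinvfix _ (hEinv0 i)
      rw [h1]
      have h2 : e (e⁻¹ (q i 0)) = q i 0 := by simp
      rw [h2, hBq, ← hβf']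
    | (k + 1) =>
      have h1 : e⁻¹ (q i (k+1)) = q i k := by
        rw [← he i k]; simp
      rw [h1, hBinvq, he, hBq, hfg]
      have : b' (q i (k+1)) = q i (k+1) := by
        by_contra h
        obtain ⟨j, hj⟩ := hb' h
        have := (qinj _ _ _ _ hj).2
        omega
      rw [this]
  · have h0 : b' z = z := by
      by_contra h
      obtain ⟨j, hj⟩ := hb' h
      exact hz ⟨(j, 0), hj⟩
    have h1 : e⁻¹ z ∉ Set.range w := hEinv z hz
    rw [hBinvfix _ h1]
    have h2 : e (e⁻¹ z) = z := by simp
    rw [h2, hBfix _ hz, h0]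

/-! ### Conjugating into the bottom row -/

lemma exists_conj_into (t : ℕ → ℕ) (ht : Function.Injective t) (b₁ : Equiv.Perm ℕ)
    (hfix : ((supp b₁)ᶜ).Infinite) :
    ∃ σ : Equiv.Perm ℕ, σ '' supp b₁ ⊆ Set.range t := by
  classical
  obtain ⟨j, hj⟩ := exists_injective_nat ↥(supp b₁)
  set f : ℕ → ℕ := fun z => if h : z ∈ supp b₁ then t (2 * j ⟨z, h⟩) else z with hf
  have hinj : Set.InjOn f (supp b₁) := by
    intro z1 h1 z2 h2 h
    simp only [hf, dif_pos h1, dif_pos h2] at h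
    have := ht h
    have := hj (by omega : j ⟨z1, h1⟩ = j ⟨z2, h2⟩)
    exact congrArg Subtype.val this
  have himg : (f '' supp b₁)ᶜ.Infinite := by
    apply Set.infinite_of_injective_forall_mem
      (f := fun i => t (2 * i + 1)) (fun i1 i2 h => by have := ht h; omega)
    intro i
    simp only [Set.mem_compl_iff]
    rintro ⟨z, hz, hEq⟩
    simp only [hf, dif_pos hz] at hEq
    have := ht hEq
    omega
  obtain ⟨σ, hσ⟩ := exists_perm_extend hinj hfix himg
  refine ⟨σ, ?_⟩
  rintro _ ⟨z, hz, rfl⟩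
  rw [hσ z hz]
  simp only [hf, dif_pos hz]
  exact ⟨2 * j ⟨z, hz⟩, rfl⟩

/-! ### Splitting a permutation into two with infinite fixed sets -/

lemma exists_split (b : Equiv.Perm ℕ) :
    ∃ b₁ b₂ : Equiv.Perm ℕ, b = b₁ * b₂ ∧ ((supp b₁)ᶜ).Infinite ∧ ((supp b₂)ᶜ).Infinite := by
  classical
  set gs : List (ℕ → ℕ) := [id, ⇑b, ⇑b⁻¹] with hgs
  set y : ℕ → ℕ := seqAvoid Set.univ Set.infinite_univ gs with hy
  have hid : (id : ℕ → ℕ) ∈ gs := by rw [hgs]; simp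
  have hbg : (⇑b : ℕ → ℕ) ∈ gs := by rw [hgs]; simp
  have hbig : (⇑b⁻¹ : ℕ → ℕ) ∈ gs := by rw [hgs]; simp
  have H1 : ∀ {m n : ℕ}, y n = y m → n = m := by
    intro m n h
    rcases lt_trichotomy m n with hlt | rfl | hlt
    · exact absurd h (seqAvoid_avoid (g := id) hlt hid)
    · rfl
    · exact absurd h.symm (seqAvoid_avoid (g := id) hlt hid)
  have H2 : ∀ {m n : ℕ}, m ≠ n → y n ≠ b (y m) := by
    intro m n hne h
    rcases lt_trichotomy m n with hlt | he | hlt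
    · exact seqAvoid_avoid hlt hbg h
    · omega
    · have : y m = b⁻¹ (y n) := by
        have := congrArg (⇑b⁻¹) h
        simpa using this.symm
      exact seqAvoid_avoid hlt hbig this
  set u : ℕ ⊕ ℕ → ℕ := Sum.elim (fun n => y (4 * n + 1)) (fun n => y (4 * n)) with hu
  set v : ℕ ⊕ ℕ → ℕ := Sum.elim (fun n => y (4 * n + 1)) (fun n => b⁻¹ (y (4 * n))) with hv
  have huinj : Function.Injective u := by
    rintro (n | n) (m | m) h <;> simp only [hu, Sum.elim_inl, Sum.elim_inr] at h <;>
      have h' := H1 h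
    · have : n = m := by omega
      rw [this]
    · exact absurd h' (by omega)
    · exact absurd h' (by omega)
    · have : n = m := by omega
      rw [this]
  have hvinj : Function.Injective v := by
    rintro (n | n) (m | m) h <;> simp only [hv, Sum.elim_inl, Sum.elim_inr] at h
    · have h' := H1 h
      have : n = m := by omega
      rw [this]
    · exfalso
      have hbb : b (y (4 * n + 1)) = y (4 * m) := by
        have := congrArg (⇑b) h
        simpa using this
      exact H2 (show 4 * n + 1 ≠ 4 * m by omega) hbb.symm
    · exfalso
      have hbb : b (y (4 * m + 1)) = y (4 * n) := by
        have := congrArg (⇑b) h.symm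
        simpa using this
      exact H2 (show 4 * m + 1 ≠ 4 * n by omega) hbb.symm
    · have hyy : y (4 * n) = y (4 * m) := by
        have := congrArg (⇑b) h
        simpa using this
      have h' := H1 hyy
      have : n = m := by omega
      rw [this]
  have hcu : (Set.range u)ᶜ.Infinite := by
    apply Set.infinite_of_injective_forall_mem
      (f := fun n => y (4 * n + 2)) (fun n1 n2 h => by have := H1 h; omega)
    intro n
    simp only [Set.mem_compl_iff, Set.mem_range, not_exists]
    rintro (m | m) h <;> simp only [hu, Sum.elim_inl, Sum.elim_inr] at h <;>
      have := H1 h <;> omega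
  have hcv : (Set.range v)ᶜ.Infinite := by
    apply Set.infinite_of_injective_forall_mem
      (f := fun n => y (4 * n + 2)) (fun n1 n2 h => by have := H1 h; omega)
    intro n
    simp only [Set.mem_compl_iff, Set.mem_range, not_exists]
    rintro (m | m) h <;> simp only [hv, Sum.elim_inl, Sum.elim_inr] at h
    · have := H1 h; omega
    · have hbb : y (4 * m) = b (y (4 * n + 2)) := by
        have := congrArg (⇑b) h
        simpa using this
      exact H2 (show 4 * n + 2 ≠ 4 * m by omega) hbb
  obtain ⟨c, hc⟩ := exists_perm_glue u v huinj hvinj hcu hcv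
  have hc1 : ∀ n, c (y (4 * n + 1)) = y (4 * n + 1) := fun n => hc (Sum.inl n)
  have hc2 : ∀ n, c (y (4 * n)) = b⁻¹ (y (4 * n)) := fun n => hc (Sum.inr n)
  refine ⟨b * c, c⁻¹, by group, ?_, ?_⟩
  · apply Set.infinite_of_injective_forall_mem
      (f := fun n => y (4 * n)) (fun n1 n2 h => by have := H1 h; omega)
    intro n
    simp only [Set.mem_compl_iff, mem_supp, not_not]
    show b (c (y (4 * n))) = y (4 * n)
    rw [hc2]; simp
  · apply Set.infinite_of_injective_forall_mem
      (f := fun n => y (4 * n + 1)) (fun n1 n2 h => by have := H1 h; omega)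
    intro n
    simp only [Set.mem_compl_iff, mem_supp, not_not]
    show c⁻¹ (y (4 * n + 1)) = y (4 * n + 1)
    conv_lhs => rw [← hc1 n]
    simp

/-! ### Main combinatorial lemma -/

theorem normal_word_of_infinite_supp (a : Equiv.Perm ℕ) (ha : (supp a).Infinite)
    (b : Equiv.Perm ℕ) :
    ∃ l : List (Equiv.Perm ℕ × Bool), b = ncword a l := by
  classical
  obtain ⟨q, τ, qinj, he⟩ := exists_ladder a ha
  set e : Equiv.Perm ℕ := a * (τ * a * τ⁻¹) with hedef
  have he' : ∀ i k, e (q i k) = q i (k + 1) := he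
  have hene : e = ncword a [(1, true), (τ, true)] := by
    simp [ncword, hedef, mul_assoc]
  have heinv : e⁻¹ = ncword a [(τ, false), (1, false)] := by
    rw [hedef]
    simp [ncword, mul_assoc]
  have ht : Function.Injective (fun i => q i 0) := by
    intro i j h
    exact (qinj _ _ _ _ h).1
  have key : ∀ b₁ : Equiv.Perm ℕ, ((supp b₁)ᶜ).Infinite →
      ∃ l : List (Equiv.Perm ℕ × Bool), b₁ = ncword a l := by
    intro b₁ hfix
    obtain ⟨σ, hσ⟩ := exists_conj_into (fun i => q i 0) ht b₁ hfix
    set b' : Equiv.Perm ℕ := σ * b₁ * σ⁻¹ with hb'def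
    have hsupp : supp b' ⊆ {z | ∃ i, q i 0 = z} := by
      rw [hb'def, supp_conj]
      intro z hz
      obtain ⟨i, hi⟩ := hσ hz
      exact ⟨i, hi⟩
    obtain ⟨B, hB⟩ := swindle q qinj e he' b' hsupp
    -- b' = B e B⁻¹ e⁻¹ = ncword a [(B,t),(B*τ,t),(τ,f),(1,f)]
    have h1 : b' = ncword a
        ((List.map (fun p => (B * p.1, p.2)) [((1 : Equiv.Perm ℕ), true), (τ, true)]) ++
          [(τ, false), (1, false)]) := by
      rw [ncword_append, ← heinv]
      have h2 : B * e * B⁻¹ = ncword a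
          (List.map (fun p => (B * p.1, p.2)) [((1 : Equiv.Perm ℕ), true), (τ, true)]) := by
        rw [hene, ← ncword_conj]
      rw [← h2, hB]
    -- b₁ = σ⁻¹ * b' * σ
    have h3 : b₁ = σ⁻¹ * b' * (σ⁻¹)⁻¹ := by
      rw [hb'def]; group
    rw [h1] at h3
    rw [ncword_conj] at h3
    exact ⟨_, h3⟩
  obtain ⟨b₁, b₂, hsplit, hfix1, hfix2⟩ := exists_split b
  obtain ⟨l₁, hl₁⟩ := key b₁ hfix1
  obtain ⟨l₂, hl₂⟩ := key b₂ hfix2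
  exact ⟨l₁ ++ l₂, by rw [hsplit, hl₁, hl₂, ncword_append]⟩




/-! ### Countability of closures -/

lemma countable_closure {G : Type*} [Group G] {s : Set G} (hs : s.Countable) :
    (Subgroup.closure s : Set G).Countable := by
  classical
  have hsc : (s ∪ s⁻¹).Countable := hs.union (hs.preimage (inv_injective))
  have : Countable ↥(s ∪ s⁻¹) := hsc.to_subtype
  have hmap : (Subgroup.closure s : Set G) ⊆
      Set.range (fun l : List ↥(s ∪ s⁻¹) => (l.map Subtype.val).prod) := by
    intro x hx
    have hx' : x ∈ Submonoid.closure (s ∪ s⁻¹) := by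
      rw [← Subgroup.closure_toSubmonoid]
      exact hx
    obtain ⟨l, hl, rfl⟩ := Submonoid.exists_list_of_mem_closure hx'
    refine ⟨l.attach.map (fun y => (⟨y.1, hl y.1 y.2⟩ : ↥(s ∪ s⁻¹))), ?_⟩
    simp [List.map_map, Function.comp_def]
  exact (Set.countable_range _).mono hmap

/-! ### The quotient of Perm ℕ by finitary permutations -/

abbrev QQ := Equiv.Perm ℕ ⧸ FS

lemma q_word (x y : QQ) (hx : x ≠ 1) : ∃ l : List (QQ × Bool), y = ncword x l := by
  obtain ⟨a, rfl⟩ := QuotientGroup.mk_surjective x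
  obtain ⟨b, rfl⟩ := QuotientGroup.mk_surjective y
  have ha : (supp a).Infinite := by
    by_contra h
    rw [Set.not_infinite] at h
    exact hx ((QuotientGroup.eq_one_iff a).mpr (mem_FS_iff.mpr h))
  obtain ⟨l, hl⟩ := normal_word_of_infinite_supp a ha b
  refine ⟨l.map (fun p => ((QuotientGroup.mk p.1 : QQ), p.2)), ?_⟩
  have := ncword_map (QuotientGroup.mk' FS) a l
  rw [hl]
  exact this

noncomputable def witList (x y : QQ) : List (QQ × Bool) := by
  classical
  exact if hx : x = (1 : QQ) then [] else (q_word x y hx).choose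

lemma witList_spec (x y : QQ) (hx : x ≠ 1) : y = ncword x (witList x y) := by
  rw [witList, dif_neg hx]
  exact (q_word x y hx).choose_spec

def listFst (l : List (QQ × Bool)) : Set QQ := {g | ∃ p ∈ l, p.1 = g}

lemma listFst_countable (l : List (QQ × Bool)) : (listFst l).Countable := by
  have : listFst l = {g | g ∈ l.map Prod.fst} := by
    ext g; simp [listFst, List.mem_map]
  rw [this]
  exact (l.map Prod.fst).finite_toSet.countable

noncomputable def witSet (K : Subgroup QQ) : Set QQ :=
  ⋃ (p : ↥(K : Set QQ) × ↥(K : Set QQ)), listFst (witList p.1.1 p.2.1)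

lemma witSet_countable (K : Subgroup QQ) (hK : (K : Set QQ).Countable) :
    (witSet K).Countable := by
  have : Countable ↥(K : Set QQ) := hK.to_subtype
  exact Set.countable_iUnion (fun p => listFst_countable _)

/-! ### The tower -/

noncomputable def stage (S₀ : Subgroup QQ) : ℕ → Subgroup QQ
  | 0 => S₀
  | (n + 1) => Subgroup.closure ((stage S₀ n : Set QQ) ∪ witSet (stage S₀ n))

lemma stage_countable (S₀ : Subgroup QQ) (h₀ : (S₀ : Set QQ).Countable) (n : ℕ) :
    ((stage S₀ n : Subgroup QQ) : Set QQ).Countable := by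
  induction n with
  | zero => exact h₀
  | succ k ih =>
    exact countable_closure (ih.union (witSet_countable _ ih))

lemma stage_mono (S₀ : Subgroup QQ) : Monotone (stage S₀) := by
  apply monotone_nat_of_le_succ
  intro n
  intro x hx
  exact Subgroup.subset_closure (Or.inl hx)

noncomputable def tower (S₀ : Subgroup QQ) : Subgroup QQ := ⨆ n, stage S₀ n

lemma mem_tower {S₀ : Subgroup QQ} {x : QQ} :
    x ∈ tower S₀ ↔ ∃ n, x ∈ stage S₀ n :=
  Subgroup.mem_iSup_of_directed (stage_mono S₀).directed_le

lemma tower_countable (S₀ : Subgroup QQ) (h₀ : (S₀ : Set QQ).Countable) :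
    ((tower S₀ : Subgroup QQ) : Set QQ).Countable := by
  have : (tower S₀ : Set QQ) ⊆ ⋃ n, ((stage S₀ n : Subgroup QQ) : Set QQ) := by
    intro x hx
    obtain ⟨n, hn⟩ := mem_tower.mp hx
    exact Set.mem_iUnion.mpr ⟨n, hn⟩
  exact (Set.countable_iUnion (fun n => stage_countable S₀ h₀ n)).mono this

lemma wit_mem_tower {S₀ : Subgroup QQ} {x y : QQ} {n : ℕ}
    (hx : x ∈ stage S₀ n) (hy : y ∈ stage S₀ n) :
    ∀ p ∈ witList x y, p.1 ∈ tower S₀ := by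
  intro p hp
  have : p.1 ∈ witSet (stage S₀ n) :=
    Set.mem_iUnion.mpr ⟨(⟨x, hx⟩, ⟨y, hy⟩), ⟨p, hp, rfl⟩⟩
  have h2 : p.1 ∈ stage S₀ (n + 1) := Subgroup.subset_closure (Or.inr this)
  exact mem_tower.mpr ⟨n + 1, h2⟩

lemma map_pmap_proj {α β : Type*} {P : α → Prop} (f : ∀ a, P a → β) (g : β → α)
    (hfg : ∀ a ha, g (f a ha) = a) :
    ∀ (l : List α) (H : ∀ a ∈ l, P a), (l.pmap f H).map g = l := by
  intro l
  induction l with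
  | nil => intro H; rfl
  | cons a l ih =>
    intro H
    simp only [List.pmap, List.map_cons, hfg, ih]

/-- The tower is a simple group: every nontrivial normal subgroup is everything. -/
theorem tower_simple (S₀ : Subgroup QQ) (W : Subgroup ↥(tower S₀)) (hW : W.Normal)
    (hne : W ≠ ⊥) : W = ⊤ := by
  classical
  -- get a nontrivial element of W
  have : ∃ x : ↥(tower S₀), x ∈ W ∧ x ≠ 1 := by
    by_contra h
    push_neg at h
    exact hne (Subgroup.eq_bot_iff_forall W |>.mpr (fun x hx => by
      by_contra h1
      exact absurd (h x hx) (fun h2 => h1 (by simp [h2]))))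
  obtain ⟨x, hxW, hx1⟩ := this
  rw [Subgroup.eq_top_iff']
  intro y
  -- both x and y live in some stage
  obtain ⟨i, hi⟩ := mem_tower.mp x.2
  obtain ⟨j, hj⟩ := mem_tower.mp y.2
  have hxk : (x : QQ) ∈ stage S₀ (max i j) := stage_mono S₀ (le_max_left i j) hi
  have hyk : (y : QQ) ∈ stage S₀ (max i j) := stage_mono S₀ (le_max_right i j) hj
  have hxQ1 : (x : QQ) ≠ 1 := by
    intro h
    exact hx1 (Subtype.ext h)
  have hspec : (y : QQ) = ncword (x : QQ) (witList (x : QQ) (y : QQ)) :=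
    witList_spec _ _ hxQ1
  have hwit : ∀ p ∈ witList (x : QQ) (y : QQ), p.1 ∈ tower S₀ :=
    wit_mem_tower hxk hyk
  -- lift the word to the tower
  set l : List (QQ × Bool) := witList (x : QQ) (y : QQ) with hldef
  set l' : List (↥(tower S₀) × Bool) :=
    l.pmap (fun (p : QQ × Bool) (hp : p.1 ∈ tower S₀) => ((⟨p.1, hp⟩ : ↥(tower S₀)), p.2))
      hwit with hl'def
  have hproj : l'.map (fun p => ((tower S₀).subtype p.1, p.2)) = l := by
    rw [hl'def]
    exact map_pmap_proj _ _ (fun a ha => rfl) l hwit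
  have key : (tower S₀).subtype (ncword x l') = (tower S₀).subtype y := by
    rw [ncword_map, hproj]
    exact hspec.symm
  have : ncword x l' = y := (tower S₀).subtype_injective key
  rw [← this]
  exact ncword_mem hW hxW l'


lemma stage_zero (S₀ : Subgroup QQ) : stage S₀ 0 = S₀ := rfl



/-- Every countable group embeds into a countable infinite "simple" group. -/
theorem exists_simple_over (S : Type*) [Group S] [Countable S] :
    ∃ (T : Type) (_ : Group T), Countable T ∧ Infinite T ∧
      (∃ φ : S →* T, Function.Injective φ) ∧
      (∀ W : Subgroup T, W.Normal → W ≠ ⊥ → W = ⊤) := by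
  classical
  let S' := S × Multiplicative ℤ
  haveI : Infinite (Multiplicative ℤ) := Infinite.of_injective Multiplicative.ofAdd
    (fun a b h => by simpa using h)
  haveI : Infinite S' := Prod.infinite_of_right
  haveI : Encodable (S' × ℕ) := Encodable.ofCountable _
  haveI : Infinite (S' × ℕ) := Prod.infinite_of_right
  obtain ⟨d⟩ := nonempty_denumerable (S' × ℕ)
  let e : (S' × ℕ) ≃ ℕ := d.eqv _
  -- left multiplication action
  let φ₀ : S' →* Equiv.Perm (S' × ℕ) :=
    MonoidHom.mk' (fun s => Equiv.prodCongr (Equiv.mulLeft s) (Equiv.refl ℕ))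
      (by
        intro a b
        refine Equiv.ext fun x => ?_
        obtain ⟨t, n⟩ := x
        show ((a * b) * t, n) = (a * (b * t), n)
        rw [mul_assoc])
  have hφ₀ : ∀ (s : S') (t : S') (n : ℕ), (φ₀ s) (t, n) = (s * t, n) := by
    intro s t n; rfl
  -- conjugation to Perm ℕ
  let cj : Equiv.Perm (S' × ℕ) →* Equiv.Perm ℕ :=
    MonoidHom.mk' (fun σ => (e.symm.trans σ).trans e)
      (by
        intro a b
        ext x
        simp)
  let ψ : S' →* QQ := (QuotientGroup.mk' FS).comp (cj.comp φ₀)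
  have hψinj : Function.Injective ψ := by
    rw [injective_iff_map_eq_one]
    intro s hs
    by_contra hs1
    have hsupp : supp (cj (φ₀ s)) = Set.univ := by
      ext x
      simp only [Set.mem_univ, iff_true, supp, Set.mem_setOf_eq]
      show ((e.symm.trans (φ₀ s)).trans e) x ≠ x
      intro h
      have h2 : (φ₀ s) (e.symm x) = e.symm x := by
        have := congrArg e.symm h
        simpa using this
      have h3 : s * (e.symm x).1 = (e.symm x).1 := by
        have := congrArg Prod.fst h2
        rw [show (φ₀ s) (e.symm x) = (s * (e.symm x).1, (e.symm x).2) from rfl] at this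
        exact this
      exact hs1 (by
        have := mul_right_cancel (b := (e.symm x).1) (a := s) (c := 1) (by simpa using h3)
        simpa using this)
    have : cj (φ₀ s) ∈ FS := (QuotientGroup.eq_one_iff _).mp hs
    rw [mem_FS_iff, hsupp] at this
    exact Set.infinite_univ this
  -- the base subgroup
  let S₀ : Subgroup QQ := ψ.range
  have hS₀c : (S₀ : Set QQ).Countable := by
    have : (S₀ : Set QQ) = Set.range ψ := by
      ext x; simp [S₀, MonoidHom.mem_range, eq_comm]
    rw [this]
    exact Set.countable_range _
  have hmemT : ∀ s' : S', ψ s' ∈ tower S₀ := by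
    intro s'
    refine mem_tower.mpr ⟨0, ?_⟩
    rw [stage_zero]
    exact ⟨s', rfl⟩
  refine ⟨↥(tower S₀), inferInstance, ?_, ?_, ?_, tower_simple S₀⟩
  · exact (tower_countable S₀ hS₀c).to_subtype
  · refine Infinite.of_injective (fun s' : S' => (⟨ψ s', hmemT s'⟩ : ↥(tower S₀))) ?_
    intro s1 s2 h
    exact hψinj (congrArg Subtype.val h)
  · refine ⟨MonoidHom.mk' (fun s => ⟨ψ (s, 1), hmemT _⟩) ?_, ?_⟩
    · intro a b
      ext
      show ψ (a * b, 1) = ψ (a, 1) * ψ (b, 1)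
      rw [← map_mul, Prod.mk_mul_mk, mul_one]
    · intro a b h
      have := hψinj (congrArg Subtype.val h)
      exact (Prod.ext_iff.mp this).1

/-- An infinite group in which every nontrivial normal subgroup is everything has no
proper finite index subgroups. -/
theorem eq_top_of_finiteIndex {T : Type*} [Group T] [Infinite T]
    (hsimple : ∀ W : Subgroup T, W.Normal → W ≠ ⊥ → W = ⊤)
    (V : Subgroup T) (hV : V.FiniteIndex) : V = ⊤ := by
  have hcore : V.normalCore.FiniteIndex := Subgroup.finiteIndex_normalCore V
  have hne : V.normalCore ≠ ⊥ := by
    intro h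
    have : (⊥ : Subgroup T).FiniteIndex := h ▸ hcore
    have h2 : (⊥ : Subgroup T).index = Nat.card T := Subgroup.index_bot
    have h3 : Nat.card T = 0 := @Nat.card_eq_zero_of_infinite T _
    exact this.index_ne_zero (by rw [h2, h3])
  have := hsimple V.normalCore (Subgroup.normalCore_normal V) hne
  have hle : V.normalCore ≤ V := Subgroup.normalCore_le V
  rw [this] at hle
  exact top_le_iff.mp hle




variable {G : Type*} [Group G]

lemma normal_iInf {ι : Sort*} (f : ι → Subgroup G) (hf : ∀ i, (f i).Normal) :
    (⨅ i, f i).Normal := by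
  constructor
  intro n hn g
  rw [Subgroup.mem_iInf] at hn ⊢
  intro i
  exact (hf i).conj_mem n (hn i) g

lemma comap_iInf' {H : Type*} [Group H] {ι : Sort*} (φ : G →* H) (f : ι → Subgroup H) :
    (⨅ i, f i).comap φ = ⨅ i, (f i).comap φ := by
  ext x
  simp [Subgroup.mem_iInf, Subgroup.mem_comap]

lemma comap_inf' {H : Type*} [Group H] (φ : G →* H) (A B : Subgroup H) :
    (A ⊓ B).comap φ = A.comap φ ⊓ B.comap φ := rfl

/-! ### Conjugation calculus on a normal subgroup -/

variable (C : Subgroup G) [hCn : C.Normal]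

/-- Conjugation `x ↦ g⁻¹ x g` as an endomorphism of `C`. -/
noncomputable def cHom (g : G) : ↥C →* ↥C := (MulAut.conjNormal g⁻¹).toMonoidHom

lemma cHom_apply (g : G) (x : ↥C) : ((cHom C g x : ↥C) : G) = g⁻¹ * x * g := by
  show ((MulAut.conjNormal g⁻¹ x : ↥C) : G) = g⁻¹ * x * g
  rw [MulAut.conjNormal_apply]
  simp

/-- `Kmap g L` is the subgroup `g L g⁻¹` of `C`. -/
noncomputable def Kmap (g : G) (L : Subgroup ↥C) : Subgroup ↥C := L.comap (cHom C g)

lemma mem_Kmap {g : G} {L : Subgroup ↥C} {x : ↥C} :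
    x ∈ Kmap C g L ↔ cHom C g x ∈ L := Iff.rfl

instance Kmap_normal (g : G) (L : Subgroup ↥C) [L.Normal] : (Kmap C g L).Normal :=
  Subgroup.normal_comap _

lemma Kmap_Kmap (g h : G) (L : Subgroup ↥C) :
    Kmap C g (Kmap C h L) = Kmap C (g * h) L := by
  show (L.comap (cHom C h)).comap (cHom C g) = L.comap (cHom C (g * h))
  rw [Subgroup.comap_comap]
  congr 1
  ext x
  · show ((cHom C h (cHom C g x) : ↥C) : G) = ((cHom C (g * h) x : ↥C) : G)
    rw [cHom_apply, cHom_apply, cHom_apply]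
    group

lemma Kmap_one (L : Subgroup ↥C) : Kmap C 1 L = L := by
  ext x
  rw [mem_Kmap]
  have : cHom C 1 x = x := by
    apply Subtype.ext
    rw [cHom_apply]
    simp
  rw [this]

lemma Kmap_mem_C {c : G} (hc : c ∈ C) (L : Subgroup ↥C) [hL : L.Normal] :
    Kmap C c L = L := by
  ext x
  rw [mem_Kmap]
  have hch : cHom C c x = (⟨c, hc⟩ : ↥C)⁻¹ * x * ⟨c, hc⟩ := by
    apply Subtype.ext
    rw [cHom_apply]
    rfl
  rw [hch]
  constructor
  · intro h
    have := hL.conj_mem _ h (⟨c, hc⟩ : ↥C)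
    have h2 : (⟨c, hc⟩ : ↥C) * ((⟨c, hc⟩ : ↥C)⁻¹ * x * ⟨c, hc⟩) * (⟨c, hc⟩ : ↥C)⁻¹ = x := by
      group
    rwa [h2] at this
  · intro h
    have := hL.conj_mem _ h (⟨c, hc⟩ : ↥C)⁻¹
    simpa [mul_assoc] using this

lemma Kmap_coset {g g' : G} (h : (g : G ⧸ C) = (g' : G ⧸ C)) (L : Subgroup ↥C) [L.Normal] :
    Kmap C g L = Kmap C g' L := by
  have hc : g⁻¹ * g' ∈ C := (QuotientGroup.eq.mp h)
  have : g' = g * (g⁻¹ * g') := by group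
  rw [this, ← Kmap_Kmap, Kmap_mem_C C hc]

lemma Kmap_mono (g : G) {L L' : Subgroup ↥C} (h : L ≤ L') : Kmap C g L ≤ Kmap C g L' :=
  Subgroup.comap_mono h


lemma Kmap_def (g : G) (L : Subgroup ↥C) : Kmap C g L = L.comap (cHom C g) := rfl

lemma conjNormal_coe (g : G) (m : ↥C) :
    ((MulAut.conjNormal g m : ↥C) : G) = g * m * g⁻¹ :=
  MulAut.conjNormal_apply g m

lemma cHom_conjNormal (g : G) (m : ↥C) : cHom C g (MulAut.conjNormal g m) = m := by
  apply Subtype.ext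
  rw [cHom_apply, conjNormal_coe]
  group

/-! ### Pushing an embedding from `C ⧸ L` to `G ⧸ (L.map C.subtype)` -/

lemma push_quot (L : Subgroup ↥C) [L.Normal] (M : Subgroup G) [M.Normal]
    (hML : M = L.map C.subtype) :
    ∃ χ : (↥C ⧸ L) →* (G ⧸ M), Function.Injective χ := by
  have hker : ∀ x : ↥C, x ∈ L → ((QuotientGroup.mk' M).comp C.subtype) x = 1 := by
    intro x hx
    rw [MonoidHom.comp_apply, QuotientGroup.mk'_apply, QuotientGroup.eq_one_iff]
    rw [hML]
    exact ⟨x, hx, rfl⟩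
  refine ⟨QuotientGroup.lift L ((QuotientGroup.mk' M).comp C.subtype) (fun x hx => (MonoidHom.mem_ker).mpr (hker x hx)), ?_⟩
  rw [injective_iff_map_eq_one]
  intro z hz
  obtain ⟨c, rfl⟩ := QuotientGroup.mk_surjective z
  rw [QuotientGroup.lift_mk'] at hz
  rw [MonoidHom.comp_apply, QuotientGroup.mk'_apply, QuotientGroup.eq_one_iff, hML] at hz
  obtain ⟨l, hl, hlc⟩ := hz
  have : l = c := Subtype.ext hlc
  subst this
  rw [QuotientGroup.eq_one_iff]
  exact hl

/-! ### Descending an embedding along a bigger kernel -/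

lemma inj_descend (L₀ L : Subgroup ↥C) [L₀.Normal] [L.Normal] (hle : L₀ ≤ L)
    {T : Type*} [Group T] (θ : T →* ↥C ⧸ L₀) (hθ : Function.Injective θ)
    (hint : L ⊓ ((θ.range).comap (QuotientGroup.mk' L₀)) ≤ L₀) :
    Function.Injective
      ((QuotientGroup.map L₀ L (MonoidHom.id ↥C) (by simpa using hle)).comp θ) := by
  rw [injective_iff_map_eq_one]
  intro t ht
  obtain ⟨c, hc⟩ := QuotientGroup.mk_surjective (θ t)
  rw [MonoidHom.comp_apply, ← hc, QuotientGroup.map_mk] at ht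
  simp only [MonoidHom.id_apply] at ht
  rw [QuotientGroup.eq_one_iff] at ht
  have hcP : c ∈ (θ.range).comap (QuotientGroup.mk' L₀) := by
    rw [Subgroup.mem_comap]
    exact ⟨t, hc.symm⟩
  have : c ∈ L₀ := hint ⟨ht, hcP⟩
  apply hθ
  rw [← hc, map_one]
  exact (QuotientGroup.eq_one_iff c).mpr this





lemma embeds_of_hom {G : Type*} [Group G] {T : Type} [Group T] (M : Subgroup G)
    (hM : M.Normal) (ψ : T →* G ⧸ M) (hψ : Function.Injective ψ) :
    EmbedsInQuotient T G := by
  refine ⟨M, hM, fun t => (ψ t).out, ?_, ?_⟩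
  · have hout : ∀ t, (QuotientGroup.mk (ψ t).out : G ⧸ M) = ψ t := fun t =>
      QuotientGroup.out_eq' _
    intro t1 t2 h
    apply hψ
    rw [← hout t1, ← hout t2]
    exact h
  · intro s t
    have hout : ∀ t, (QuotientGroup.mk (ψ t).out : G ⧸ M) = ψ t := fun t =>
      QuotientGroup.out_eq' _
    rw [QuotientGroup.mk_mul, hout, hout, hout, map_mul]

theorem engine {G : Type*} [Group G] (C : Subgroup G) [hCn : C.Normal] [hCfi : C.FiniteIndex]
    {T : Type} [Group T]
    (hsimple : ∀ W : Subgroup T, W.Normal → W ≠ ⊥ → W = ⊤)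
    (L₀ : Subgroup ↥C) [hL₀ : L₀.Normal]
    (θ₁ : T →* ↥C ⧸ L₀) (hθ₁ : Function.Injective θ₁) :
    EmbedsInQuotient T G := by
  classical
  set P : Subgroup ↥C := (θ₁.range).comap (QuotientGroup.mk' L₀) with hPdef
  set SL : Set (Subgroup ↥C) := {L | L.Normal ∧ L₀ ≤ L ∧ L ⊓ P ≤ L₀} with hSLdef
  have hL₀SL : L₀ ∈ SL := ⟨hL₀, le_refl _, inf_le_left⟩
  -- Zorn's lemma
  obtain ⟨Ls, hL₀Ls, hLsmax⟩ := zorn_le_nonempty₀ SL (fun c hcSL hchain y hyc => by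
    refine ⟨sSup c, ⟨?_, ?_, ?_⟩, fun z hz => le_sSup hz⟩
    · constructor
      intro n hn g
      rw [Subgroup.mem_sSup_of_directedOn ⟨y, hyc⟩ hchain.directedOn] at hn ⊢
      obtain ⟨S, hSc, hnS⟩ := hn
      exact ⟨S, hSc, (hcSL hSc).1.conj_mem n hnS g⟩
    · exact le_trans (hcSL hyc).2.1 (le_sSup hyc)
    · intro x hx
      rw [Subgroup.mem_inf] at hx
      obtain ⟨hx1, hx2⟩ := hx
      rw [Subgroup.mem_sSup_of_directedOn ⟨y, hyc⟩ hchain.directedOn] at hx1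
      obtain ⟨S, hSc, hxS⟩ := hx1
      exact (hcSL hSc).2.2 ⟨hxS, hx2⟩) L₀ hL₀SL
  obtain ⟨hLsn, hle, hint⟩ := hLsmax.prop
  haveI : Ls.Normal := hLsn
  -- the conjugates of Ls and their intersection
  set K : G ⧸ C → Subgroup ↥C := fun x => Kmap C x.out Ls with hKdef
  have hKmk : ∀ g : G, K (g : G ⧸ C) = Kmap C g Ls := by
    intro g
    apply Kmap_coset
    exact QuotientGroup.out_eq' _
  haveI hKn : ∀ x, (K x).Normal := fun x => Kmap_normal C _ Ls
  set M' : Subgroup ↥C := ⨅ x : G ⧸ C, K x with hM'def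
  haveI hM'n : M'.Normal := normal_iInf K hKn
  have hK1 : K (1 : G ⧸ C) = Ls := by
    have : ((1 : G) : G ⧸ C) = (1 : G ⧸ C) := by simp
    rw [← this, hKmk, Kmap_one]
  have hM'le : M' ≤ Ls := by
    have := iInf_le K (1 : G ⧸ C)
    rwa [hK1] at this
  have hM'K : ∀ x, M' ≤ K x := fun x => iInf_le K x
  -- invariance of M' under all Kmap
  have hKg : ∀ (g : G) (x : G ⧸ C), Kmap C g (K x) = K ((g : G ⧸ C) * x) := by
    intro g x
    rw [hKdef]
    show Kmap C g (Kmap C x.out Ls) = Kmap C ((((g : G ⧸ C) * x)).out) Ls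
    rw [Kmap_Kmap]
    apply Kmap_coset
    show ((g * x.out : G) : G ⧸ C) = _
    rw [QuotientGroup.mk_mul, QuotientGroup.out_eq', QuotientGroup.out_eq']
  have hM'inv : ∀ g : G, Kmap C g M' = M' := by
    intro g
    rw [hM'def, Kmap_def, comap_iInf']
    have h1 : ∀ x, (K x).comap (cHom C g) = K ((g : G ⧸ C) * x) := by
      intro x
      rw [← Kmap_def, hKg]
    rw [iInf_congr h1]
    apply le_antisymm
    · apply le_iInf
      intro y
      have := iInf_le (fun x => K ((g : G ⧸ C) * x)) (((g : G ⧸ C))⁻¹ * y)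
      rwa [mul_inv_cancel_left] at this
    · apply le_iInf
      intro y
      exact iInf_le K _
  -- M' comes from a normal subgroup of G
  set M : Subgroup G := M'.map C.subtype with hMdef
  haveI hMn : M.Normal := by
    constructor
    intro n hn g
    obtain ⟨m, hm, rfl⟩ := hn
    have key : g * ((C.subtype m : G)) * g⁻¹ = ((MulAut.conjNormal g m : ↥C) : G) :=
      (conjNormal_coe C g m).symm
    rw [key]
    refine ⟨MulAut.conjNormal g m, ?_, rfl⟩
    have hmem : MulAut.conjNormal g m ∈ Kmap C g M' := by
      rw [mem_Kmap, cHom_conjNormal]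
      exact hm
    rw [hM'inv g] at hmem
    exact hmem
  obtain ⟨χ, hχ⟩ := push_quot C M' M rfl
  -- the descended embedding
  set θL : T →* ↥C ⧸ Ls :=
    (QuotientGroup.map L₀ Ls (MonoidHom.id ↥C) (by simpa using hle)).comp θ₁ with hθLdef
  have hθLinj : Function.Injective θL := inj_descend C L₀ Ls hle θ₁ hθ₁ hint
  have hθLmk : ∀ t, ∀ c : ↥C, θ₁ t = QuotientGroup.mk c → θL t = QuotientGroup.mk c := by
    intro t c hc
    rw [hθLdef, MonoidHom.comp_apply, hc, QuotientGroup.map_mk]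
    rfl
  by_cases hcase : Ls ≤ M'
  · -- Ls is itself invariant
    have hEq : Ls = M' := le_antisymm hcase hM'le
    have hMAn : (Ls.map C.subtype).Normal := by rw [hEq]; exact hMn
    haveI := hMAn
    obtain ⟨χ', hχ'⟩ := push_quot C Ls (Ls.map C.subtype) rfl
    exact embeds_of_hom _ hMAn (χ'.comp θL) (hχ'.comp hθLinj)
  · -- the interesting case
    set 𝔅 : Set (Finset (G ⧸ C)) :=
      {B | (1 : G ⧸ C) ∈ B ∧ ¬ (⨅ x : ↥B, K ↑x) ≤ M'} with h𝔅def
    have hsingleton : ({1} : Finset (G ⧸ C)) ∈ 𝔅 := by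
      refine ⟨Finset.mem_singleton_self _, ?_⟩
      have : (⨅ x : ↥({1} : Finset (G ⧸ C)), K ↑x) = Ls := by
        apply le_antisymm
        · have := iInf_le (fun x : ↥({1} : Finset (G ⧸ C)) => K ↑x)
            ⟨1, Finset.mem_singleton_self _⟩
          rwa [hK1] at this
        · apply le_iInf
          intro x
          have hx : (x : G ⧸ C) = 1 := Finset.mem_singleton.mp x.2
          rw [hx, hK1]
      rw [this]
      exact hcase
  -- maximal B
    haveI : Finite (G ⧸ C) := Subgroup.finite_quotient_of_finiteIndex
    haveI := Fintype.ofFinite (G ⧸ C)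
    obtain ⟨B, hB𝔅, hBmax⟩ := Set.Finite.exists_maximalFor Finset.card 𝔅
      (Set.toFinite _) ⟨_, hsingleton⟩
    set X : Subgroup ↥C := ⨅ x : ↥B, K ↑x with hXdef
    haveI hXn : X.Normal := normal_iInf _ (fun x => hKn _)
    have hXM' : ¬ X ≤ M' := hB𝔅.2
    have hM'X : M' ≤ X := le_iInf fun x => hM'K _
    have hyex : ∃ y : G ⧸ C, y ∉ B := by
      by_contra h
      push_neg at h
      exact hXM' (le_iInf fun x => iInf_le (fun z : ↥B => K ↑z) ⟨x, h x⟩)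
    obtain ⟨y, hyB⟩ := hyex
    have hXKy : X ⊓ K y = M' := by
      have hsub : (⨅ x : ↥(insert y B), K ↑x) ≤ M' := by
        by_contra hc
        have hBin : insert y B ∈ 𝔅 :=
          ⟨Finset.mem_insert_of_mem hB𝔅.1, hc⟩
        have hcard := hBmax hBin (Finset.card_le_card (Finset.subset_insert y B))
        rw [Finset.card_insert_of_notMem hyB] at hcard
        omega
      apply le_antisymm
      · refine le_trans ?_ hsub
        apply le_iInf
        rintro ⟨z, hz⟩
        rcases Finset.mem_insert.mp hz with rfl | hzB
        · exact inf_le_right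
        · exact le_trans inf_le_left (iInf_le (fun x : ↥B => K ↑x) ⟨z, hzB⟩)
      · exact le_inf hM'X (hM'K y)
    -- the pivot subgroup J
    set a : G := y.out with hadef
    have hKya : K y = Kmap C a Ls := by
      rw [hKdef]
    set J : Subgroup ↥C := Kmap C a⁻¹ X with hJdef
    haveI hJn : J.Normal := Kmap_normal C _ X
    have hJLs : J ⊓ Ls = M' := by
      have h1 : Kmap C a⁻¹ (K y) = Ls := by
        rw [hKya, Kmap_Kmap, inv_mul_cancel, Kmap_one]
      calc J ⊓ Ls = Kmap C a⁻¹ X ⊓ Kmap C a⁻¹ (K y) := by rw [h1]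
        _ = Kmap C a⁻¹ (X ⊓ K y) := by rw [Kmap_def, Kmap_def, Kmap_def]; rfl
        _ = Kmap C a⁻¹ M' := by rw [hXKy]
        _ = M' := hM'inv a⁻¹
    have hJM' : ¬ J ≤ M' := by
      intro h
      apply hXM'
      have h2 : Kmap C a J ≤ Kmap C a M' := Kmap_mono C a h
      rw [hM'inv a] at h2
      rw [hJdef, Kmap_Kmap, mul_inv_cancel, Kmap_one] at h2
      exact h2
    -- the dichotomy
    set Jbar : Subgroup (↥C ⧸ Ls) := J.map (QuotientGroup.mk' Ls) with hJbardef
    haveI hJbarn : Jbar.Normal := hJn.map _ (QuotientGroup.mk'_surjective Ls)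
    set W : Subgroup T := Jbar.comap θL with hWdef
    haveI hWn : W.Normal := Subgroup.normal_comap θL
    by_cases hW : W = ⊥
    · -- contradiction with maximality of Ls
      exfalso
      set L1 : Subgroup ↥C := J ⊔ Ls with hL1def
      haveI hL1n : L1.Normal := Subgroup.sup_normal J Ls
      have hL1SL : L1 ∈ SL := by
        refine ⟨hL1n, le_trans hle le_sup_right, ?_⟩
        intro p hp
        rw [Subgroup.mem_inf] at hp
        obtain ⟨hpL1, hpP⟩ := hp
        have hpset : (p : ↥C) ∈ (J : Set ↥C) * (Ls : Set ↥C) := by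
          rw [← Subgroup.mul_normal J Ls]
          exact hpL1
        obtain ⟨j, hj, l, hl, rfl⟩ := hpset
        have hmk : (QuotientGroup.mk (j * l) : ↥C ⧸ Ls) = QuotientGroup.mk j := by
          rw [QuotientGroup.mk_mul]
          have : (QuotientGroup.mk l : ↥C ⧸ Ls) = 1 := (QuotientGroup.eq_one_iff l).mpr hl
          rw [this, mul_one]
        have hpJbar : (QuotientGroup.mk (j * l) : ↥C ⧸ Ls) ∈ Jbar := by
          rw [hmk]
          exact ⟨j, hj, rfl⟩
        have hpP' := hpP
        rw [hPdef, Subgroup.mem_comap] at hpP'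
        obtain ⟨t, ht⟩ := hpP'
        rw [QuotientGroup.mk'_apply] at ht
        have hθLt : θL t = QuotientGroup.mk (j * l) := hθLmk t _ ht
        have htW : t ∈ W := by
          rw [hWdef, Subgroup.mem_comap, hθLt]
          exact hpJbar
        rw [hW] at htW
        have ht1 : t = 1 := htW
        have : (QuotientGroup.mk (j * l) : ↥C ⧸ Ls) = 1 := by
          rw [← hθLt, ht1, map_one]
        have hjlLs : j * l ∈ Ls := (QuotientGroup.eq_one_iff _).mp this
        exact hint (Subgroup.mem_inf.mpr ⟨hjlLs, hpP⟩)
      have hL1Ls : L1 ≤ Ls := hLsmax.2 hL1SL le_sup_right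
      have hJLs' : J ≤ Ls := le_trans le_sup_left hL1Ls
      apply hJM'
      rw [← hJLs]
      exact le_inf (le_refl J) hJLs'
    · -- T embeds into C ⧸ M', hence into G ⧸ M
      have hWtop : W = ⊤ := hsimple W hWn hW
      have hrange : ∀ t, θL t ∈ Jbar := by
        intro t
        have : t ∈ W := by rw [hWtop]; trivial
        exact this
      set μ : (↥C ⧸ M') →* (↥C ⧸ Ls) :=
        QuotientGroup.map M' Ls (MonoidHom.id ↥C) (by simpa using hM'le) with hμdef
      have hμmk : ∀ c : ↥C, μ (QuotientGroup.mk c) = QuotientGroup.mk c := by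
        intro c
        rw [hμdef, QuotientGroup.map_mk]
        rfl
      set Jt : Subgroup (↥C ⧸ M') := J.map (QuotientGroup.mk' M') with hJtdef
      have hcomp : μ.comp (QuotientGroup.mk' M') = QuotientGroup.mk' Ls := by
        ext c
        rw [MonoidHom.comp_apply, QuotientGroup.mk'_apply, QuotientGroup.mk'_apply]
        exact hμmk c
      have hJtJbar : Jt.map μ = Jbar := by
        rw [hJtdef, Subgroup.map_map, hcomp, hJbardef]
      have hφJmem : ∀ x : ↥Jt, μ (Jt.subtype x) ∈ Jbar := by
        intro x
        rw [← hJtJbar]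
        exact ⟨(x : ↥C ⧸ M'), x.2, rfl⟩
      set φJ : ↥Jt →* ↥Jbar :=
        MonoidHom.codRestrict (μ.comp Jt.subtype) Jbar hφJmem with hφJdef
      have hφJinj : Function.Injective φJ := by
        rw [injective_iff_map_eq_one]
        rintro ⟨z, hz⟩ h
        obtain ⟨j, hj, rfl⟩ := hz
        have h1 : μ (QuotientGroup.mk' M' j) = 1 := by
          have := congrArg (Subtype.val) h
          exact this
        rw [QuotientGroup.mk'_apply, hμmk] at h1
        have hjLs : j ∈ Ls := (QuotientGroup.eq_one_iff j).mp h1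
        have hjM' : j ∈ M' := by
          rw [← hJLs]
          exact ⟨hj, hjLs⟩
        apply Subtype.ext
        show QuotientGroup.mk' M' j = 1
        rw [QuotientGroup.mk'_apply]
        exact (QuotientGroup.eq_one_iff j).mpr hjM'
      have hφJsurj : Function.Surjective φJ := by
        rintro ⟨z, hz⟩
        rw [← hJtJbar] at hz
        obtain ⟨x, hx, rfl⟩ := hz
        exact ⟨⟨x, hx⟩, rfl⟩
      set ι : ↥Jt ≃* ↥Jbar := MulEquiv.ofBijective φJ ⟨hφJinj, hφJsurj⟩ with hιdef
      set ψ : T →* G ⧸ M :=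
        χ.comp (Jt.subtype.comp (ι.symm.toMonoidHom.comp
          (MonoidHom.codRestrict θL Jbar hrange))) with hψdef
      refine embeds_of_hom M hMn ψ ?_
      apply hχ.comp
      apply (Jt.subtype_injective).comp
      apply (ι.symm.injective).comp
      intro t1 t2 h
      apply hθLinj
      exact congrArg Subtype.val h
  done




lemma embeds_comp {S T : Type} [Group S] [Group T] {G : Type*} [Group G]
    (φ : S →* T) (hφ : Function.Injective φ) (h : EmbedsInQuotient T G) :
    EmbedsInQuotient S G := by
  obtain ⟨N, hN, f, hfinj, hfmul⟩ := h
  refine ⟨N, hN, fun s => f (φ s), ?_, ?_⟩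
  · intro a b hab
    exact hφ (hfinj hab)
  · intro a b
    simp only [map_mul]
    exact hfmul _ _

theorem main_sq {G : Type*} [Group G] (H : Subgroup G) (hfi : H.FiniteIndex)
    (hH : SQUniversal ↥H) : SQUniversal G := by
  classical
  intro S _ _
  obtain ⟨T, hTgroup, hTc, hTi, ⟨φS, hφS⟩, hsimple⟩ := exists_simple_over S
  letI := hTgroup
  haveI := hTc
  haveI := hTi
  haveI := hfi
  -- embed T into a quotient of H
  obtain ⟨N, hN, f, hfinj, hfmul⟩ := hH T
  haveI := hN
  set θ : T →* ↥H ⧸ N := MonoidHom.mk' (fun t => QuotientGroup.mk (f t))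
    (fun a b => by
      show (QuotientGroup.mk (f (a * b)) : ↥H ⧸ N) =
        QuotientGroup.mk (f a) * QuotientGroup.mk (f b)
      rw [← hfmul a b]
      rfl) with hθdef
  have hθinj : Function.Injective θ := hfinj
  -- pass to the normal core
  set D : Subgroup G := H.normalCore with hDdef
  haveI hDn : D.Normal := by rw [hDdef]; infer_instance
  haveI hDfi : D.FiniteIndex := by rw [hDdef]; infer_instance
  have hDH : D ≤ H := by rw [hDdef]; exact Subgroup.normalCore_le H
  set ρ : ↥D →* ↥H ⧸ N := (QuotientGroup.mk' N).comp (Subgroup.inclusion hDH) with hρdef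
  haveI hDHn : (D.subgroupOf H).Normal := by
    constructor
    intro x hx g
    rw [Subgroup.mem_subgroupOf] at hx ⊢
    have := hDn.conj_mem _ hx (g : G)
    simpa using this
  have hrange : ρ.range = (D.subgroupOf H).map (QuotientGroup.mk' N) := by
    rw [hρdef, MonoidHom.range_comp, Subgroup.inclusion_range]
  haveI hRn : ρ.range.Normal := by
    rw [hrange]
    exact hDHn.map _ (QuotientGroup.mk'_surjective N)
  haveI hRfi : ρ.range.FiniteIndex := by
    constructor
    intro h0
    have hdvd : ρ.range.index ∣ (D.subgroupOf H).index := by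
      rw [hrange]
      exact Subgroup.index_map_dvd _ (QuotientGroup.mk'_surjective N)
    rw [h0] at hdvd
    have : (D.subgroupOf H).index = 0 := zero_dvd_iff.mp hdvd
    exact (Subgroup.instFiniteIndex_subgroupOf D H).index_ne_zero this
  -- the preimage of ρ.range in T is all of T
  have hV : Subgroup.comap θ ρ.range = ⊤ := by
    apply eq_top_of_finiteIndex hsimple
    constructor
    intro h0
    rw [Subgroup.index_comap] at h0
    have hdvd : ρ.range.relIndex θ.range ∣ ρ.range.index :=
      Subgroup.relIndex_dvd_index_of_normal ρ.range θ.range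
    rw [h0] at hdvd
    exact hRfi.index_ne_zero (zero_dvd_iff.mp hdvd)
  have hmem : ∀ t, θ t ∈ ρ.range := by
    intro t
    have : t ∈ Subgroup.comap θ ρ.range := by rw [hV]; trivial
    exact this
  -- the induced embedding into D ⧸ ker ρ
  haveI : ρ.ker.Normal := MonoidHom.normal_ker ρ
  set e1 : (↥D ⧸ ρ.ker) ≃* ρ.range := QuotientGroup.quotientKerEquivRange ρ with he1def
  set θc : T →* ρ.range := MonoidHom.codRestrict θ ρ.range hmem with hθcdef
  have hθcinj : Function.Injective θc := by
    intro a b h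
    apply hθinj
    exact congrArg Subtype.val h
  set θ₂ : T →* (↥D ⧸ ρ.ker) := e1.symm.toMonoidHom.comp θc with hθ₂def
  have hθ₂inj : Function.Injective θ₂ := e1.symm.injective.comp hθcinj
  -- run the engine
  have hembT : EmbedsInQuotient T G := engine D hsimple ρ.ker θ₂ hθ₂inj
  exact embeds_comp φS hφS hembT


end SQU

/-- If a group `G` has a finite-index subgroup `H` that is SQ-universal, then
`G` is SQ-universal. -/
theorem sqUniversal_of_finiteIndex_sqUniversal
    {G : Type*} [Group G] (H : Subgroup G) (hfi : H.FiniteIndex)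
    (hH : SQUniversal H) : SQUniversal G :=
  SQU.main_sq H hfi hH
end
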